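/- arXiv:1310.7003 — 8 statements merged into one kernel-verified Lean document; each statement's English description precedes it below -/
import Mathlib

section
/- Let B be a nonempty set of permutations, each of which is sum indecomposable. Then the set Av^I(B) of involutions avoiding every element of B has a proper growth rate: the limit lim_{n→∞} |Av^I_n(B)|^{1/n} exists and is finite. -/
/-- `π` contains the pattern `σ`. -/
def Contains {n k : ℕ} (π : Equiv.Perm (Fin n)) (σ : Equiv.Perm (Fin k)) : Prop :=
  ∃ f : Fin k → Fin n, StrictMono f ∧ ∀ i j : Fin k, σ i < σ j ↔ π (f i) < π (f j)

def IsInvolution {n : ℕ} (π : Equiv.Perm (Fin n)) : Prop := π⁻¹ = π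

/-- direct sum of permutations -/
def directSum {m n : ℕ} (σ : Equiv.Perm (Fin m)) (τ : Equiv.Perm (Fin n)) :
    Equiv.Perm (Fin (m + n)) :=
  finSumFinEquiv.symm.trans ((Equiv.sumCongr σ τ).trans finSumFinEquiv)

/-- skew sum of permutations -/
def skewSum {m n : ℕ} (σ : Equiv.Perm (Fin m)) (τ : Equiv.Perm (Fin n)) :
    Equiv.Perm (Fin (m + n)) :=
  finSumFinEquiv.symm.trans ((Equiv.sumCongr σ τ).trans
    ((Equiv.sumComm (Fin m) (Fin n)).trans (finSumFinEquiv.trans (finCongr (Nat.add_comm n m)))))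

def SumDecomposable {n : ℕ} (π : Equiv.Perm (Fin n)) : Prop :=
  ∃ (a b : ℕ) (h : a + b = n), 0 < a ∧ 0 < b ∧
    ∃ (σ : Equiv.Perm (Fin a)) (τ : Equiv.Perm (Fin b)),
      π = (finCongr h).permCongr (directSum σ τ)

def SkewDecomposable {n : ℕ} (π : Equiv.Perm (Fin n)) : Prop :=
  ∃ (a b : ℕ) (h : a + b = n), 0 < a ∧ 0 < b ∧
    ∃ (σ : Equiv.Perm (Fin a)) (τ : Equiv.Perm (Fin b)),
      π = (finCongr h).permCongr (skewSum σ τ)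

/-- a set of contiguous indices/values -/
def SetContiguous {n : ℕ} (S : Set (Fin n)) : Prop :=
  ∀ ⦃i j k : Fin n⦄, i ∈ S → j ∈ S → i ≤ k → k ≤ j → k ∈ S

/-- an interval of the permutation `π` -/
def IsPermInterval {n : ℕ} (π : Equiv.Perm (Fin n)) (S : Set (Fin n)) : Prop :=
  SetContiguous S ∧ SetContiguous (π '' S)

/-- A permutation of length at least 2 is simple if all its intervals are trivial. -/
def IsSimple {n : ℕ} (π : Equiv.Perm (Fin n)) : Prop :=
  2 ≤ n ∧ ∀ S : Set (Fin n), IsPermInterval π S → S.ncard ≤ 1 ∨ S = Set.univ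

-- patterns (0-indexed one-line notation)
noncomputable def p123 : Equiv.Perm (Fin 3) := Equiv.ofBijective ![0, 1, 2] (by decide)
noncomputable def p132 : Equiv.Perm (Fin 3) := Equiv.ofBijective ![0, 2, 1] (by decide)
noncomputable def p213 : Equiv.Perm (Fin 3) := Equiv.ofBijective ![1, 0, 2] (by decide)
noncomputable def p1324 : Equiv.Perm (Fin 4) := Equiv.ofBijective ![0, 2, 1, 3] (by decide)
noncomputable def p1234 : Equiv.Perm (Fin 4) := Equiv.ofBijective ![0, 1, 2, 3] (by decide)
noncomputable def p1342 : Equiv.Perm (Fin 4) := Equiv.ofBijective ![0, 2, 3, 1] (by decide)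
noncomputable def p1423 : Equiv.Perm (Fin 4) := Equiv.ofBijective ![0, 3, 1, 2] (by decide)
noncomputable def p2341 : Equiv.Perm (Fin 4) := Equiv.ofBijective ![1, 2, 3, 0] (by decide)
noncomputable def p2413 : Equiv.Perm (Fin 4) := Equiv.ofBijective ![1, 3, 0, 2] (by decide)
noncomputable def p5274163 : Equiv.Perm (Fin 7) := Equiv.ofBijective ![4, 1, 6, 3, 0, 5, 2] (by decide)

-- the order-respecting equivalence between a lexicographic sigma of Fins and a Fin
noncomputable def finSigmaOrderEquiv {m : ℕ} (k : Fin m → ℕ) :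
    (Σₗ i : Fin m, Fin (k i)) ≃o Fin (∑ i, k i) :=
  (monoEquivOfFin (Σₗ i : Fin m, Fin (k i)) (by
    rw [Fintype.card_congr (ofLex : _ ≃ (Σ i : Fin m, Fin (k i)))]
    simp)).symm

/-- the inflation `σ[α 0, …, α (m-1)]` -/
noncomputable def inflation {m : ℕ} (σ : Equiv.Perm (Fin m)) (k : Fin m → ℕ)
    (α : ∀ i, Equiv.Perm (Fin (k i))) : Equiv.Perm (Fin (∑ i, k i)) :=
  ((finSigmaOrderEquiv k).toEquiv.symm.trans
    ((ofLex : (Σₗ i : Fin m, Fin (k i)) ≃ (Σ i : Fin m, Fin (k i))).trans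
      ((Equiv.sigmaCongr σ fun i =>
          (α i).trans (finCongr (congrArg k (σ.symm_apply_apply i).symm))).trans
        ((toLex : (Σ t : Fin m, Fin (k (σ.symm t))) ≃ (Σₗ t : Fin m, Fin (k (σ.symm t)))).trans
          ((finSigmaOrderEquiv fun t => k (σ.symm t)).toEquiv.trans
            (finCongr (Equiv.sum_comp σ.symm k)))))))

noncomputable def avICount {b : ℕ} (β : Equiv.Perm (Fin b)) (n : ℕ) : ℕ :=
  Nat.card {π : Equiv.Perm (Fin n) // IsInvolution π ∧ ¬ Contains π β}

noncomputable def avCount {b : ℕ} (β : Equiv.Perm (Fin b)) (n : ℕ) : ℕ :=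
  Nat.card {π : Equiv.Perm (Fin n) // ¬ Contains π β}

noncomputable def avICountSet (B : Set ((k : ℕ) × Equiv.Perm (Fin k))) (n : ℕ) : ℕ :=
  Nat.card {π : Equiv.Perm (Fin n) // IsInvolution π ∧ ∀ β ∈ B, ¬ Contains π β.2}

/-!
Since the patterns in `B` are sum indecomposable, `σ ⊕ τ` avoids `B` whenever `σ` and `τ` do, and
a direct sum of involutions is an involution; so the counts are supermultiplicative, and by
Fekete's lemma their `n`-th roots converge as soon as they are exponentially bounded. That bound is
the Stanley–Wilf conjecture for a single pattern of `B`, proved through Klazar's reduction to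
0-1 matrices and the Marcus–Tardos theorem. The counts are positive because the identity avoids
every sum indecomposable pattern of length at least 2; a pattern of length at most 1 makes them
vanish from `n = 1` on.
-/

open Finset

section DirectSum

variable {m n : ℕ}

@[simp]
lemma directSum_castAdd (σ : Equiv.Perm (Fin m)) (τ : Equiv.Perm (Fin n)) (i : Fin m) :
    directSum σ τ (Fin.castAdd n i) = Fin.castAdd n (σ i) := by
  simp [directSum]

@[simp]
lemma directSum_natAdd (σ : Equiv.Perm (Fin m)) (τ : Equiv.Perm (Fin n)) (j : Fin n) :
    directSum σ τ (Fin.natAdd m j) = Fin.natAdd m (τ j) := by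
  simp [directSum]

lemma directSum_inv (σ : Equiv.Perm (Fin m)) (τ : Equiv.Perm (Fin n)) :
    (directSum σ τ)⁻¹ = directSum σ⁻¹ τ⁻¹ := by
  rw [inv_eq_iff_mul_eq_one]
  ext x : 1
  induction x using Fin.addCases <;> simp

lemma IsInvolution.directSum {σ : Equiv.Perm (Fin m)} {τ : Equiv.Perm (Fin n)}
    (hσ : IsInvolution σ) (hτ : IsInvolution τ) : IsInvolution (directSum σ τ) := by
  rw [IsInvolution, directSum_inv, hσ, hτ]

lemma directSum_inj {σ σ' : Equiv.Perm (Fin m)} {τ τ' : Equiv.Perm (Fin n)} :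
    directSum σ τ = directSum σ' τ' ↔ σ = σ' ∧ τ = τ' := by
  refine ⟨fun h => ⟨Equiv.ext fun i => ?_, Equiv.ext fun j => ?_⟩, fun ⟨hσ, hτ⟩ => hσ ▸ hτ ▸ rfl⟩
  · simpa using congr($h (Fin.castAdd n i))
  · simpa using congr($h (Fin.natAdd m j))

lemma directSum_val_lt_iff (σ : Equiv.Perm (Fin m)) (τ : Equiv.Perm (Fin n)) (x : Fin (m + n)) :
    (directSum σ τ x : ℕ) < m ↔ (x : ℕ) < m := by
  induction x using Fin.addCases <;> simp

end DirectSum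

lemma contains_of_forall_mem_range {N m b : ℕ} {ρ : Equiv.Perm (Fin N)}
    {π : Equiv.Perm (Fin m)} {β : Equiv.Perm (Fin b)} {e e' : Fin m → Fin N}
    (he : StrictMono e) (he' : StrictMono e') (hρ : ∀ x, ρ (e x) = e' (π x))
    {f : Fin b → Fin N} (hf : StrictMono f) (hβ : ∀ i j, β i < β j ↔ ρ (f i) < ρ (f j))
    (hrange : ∀ i, f i ∈ Set.range e) : Contains π β := by
  choose g hg using hrange
  refine ⟨g, fun i j hij => he.lt_iff_lt.mp ?_, fun i j => ?_⟩
  · rw [hg, hg]; exact hf hij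
  · rw [hβ, ← hg, ← hg, hρ, hρ, he'.lt_iff_lt]

lemma exists_cut_of_monotone {b N : ℕ} {f : Fin b → Fin N} (hf : Monotone f) (m : ℕ) :
    ∃ a ≤ b, ∀ i : Fin b, (i : ℕ) < a ↔ (f i : ℕ) < m := by
  have hex : ∃ a, a = b ∨ ∃ h : a < b, m ≤ f ⟨a, h⟩ := ⟨b, Or.inl rfl⟩
  refine ⟨Nat.find hex, Nat.find_min' hex (Or.inl rfl), fun i => ⟨fun hi => ?_, fun hi => ?_⟩⟩
  · have := Nat.find_min hex hi
    push Not at this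
    exact this.2 i.2
  · by_contra hle
    rcases Nat.find_spec hex with hb | ⟨ha, hma⟩
    · omega
    · exact absurd (hma.trans (hf (Fin.mk_le_mk.mpr (not_lt.mp hle)))) (not_le.mpr hi)

lemma sumDecomposable_of_forall_castAdd_lt_natAdd {a c : ℕ} (ha : 0 < a) (hc : 0 < c)
    (β : Equiv.Perm (Fin (a + c)))
    (h : ∀ i j, β (Fin.castAdd c i) < β (Fin.natAdd a j)) : SumDecomposable β := by
  have hlow : ∀ i, (β (Fin.castAdd c i) : ℕ) < a := by
    intro i
    have hcard : #(univ : Finset (Fin c)) ≤ #(Ioi (β (Fin.castAdd c i))) :=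
      card_le_card_of_injOn (fun j => β (Fin.natAdd a j)) (fun j _ => by simpa using h i j)
        (fun j _ j' _ hj => by simpa using hj)
    rw [card_univ, Fintype.card_fin, Fin.card_Ioi] at hcard
    omega
  have hhigh : ∀ j, a ≤ (β (Fin.natAdd a j) : ℕ) := by
    intro j
    have hcard : #(univ : Finset (Fin a)) ≤ #(Iio (β (Fin.natAdd a j))) :=
      card_le_card_of_injOn (fun i => β (Fin.castAdd c i)) (fun i _ => by simpa using h i j)
        (fun i _ i' _ hi => by simpa using hi)
    rwa [card_univ, Fintype.card_fin, Fin.card_Iio] at hcard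
  have hhigh' : ∀ j, (β (Fin.natAdd a j) : ℕ) - a < c := fun j => by omega
  let σ : Equiv.Perm (Fin a) := Equiv.ofBijective (fun i => ⟨β (Fin.castAdd c i), hlow i⟩)
    (Finite.injective_iff_bijective.mp fun i i' hi =>
      Fin.castAdd_inj.mp (β.injective (Fin.ext congr(Fin.val $hi))))
  let τ : Equiv.Perm (Fin c) := Equiv.ofBijective (fun j => ⟨β (Fin.natAdd a j) - a, hhigh' j⟩)
    (Finite.injective_iff_bijective.mp fun j j' hj => by
      have := congr(Fin.val $hj); have := hhigh j; have := hhigh j'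
      exact (Fin.natAdd_inj a).mp (β.injective (Fin.ext (by simp only at *; omega))))
  refine ⟨a, c, rfl, ha, hc, σ, τ, ?_⟩
  ext x : 1
  simp only [finCongr_refl, Equiv.permCongr_apply, Equiv.refl_apply, Equiv.refl_symm]
  induction x using Fin.addCases with
  | left i => ext; simp [σ]
  | right j => ext; have := hhigh j; simp [τ]; omega

lemma sumDecomposable_of_forall_lt {a b : ℕ} (ha : 0 < a) (hab : a < b) (β : Equiv.Perm (Fin b))
    (h : ∀ i j : Fin b, (i : ℕ) < a → a ≤ (j : ℕ) → β i < β j) : SumDecomposable β := by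
  obtain ⟨c, rfl⟩ := Nat.exists_eq_add_of_le hab.le
  exact sumDecomposable_of_forall_castAdd_lt_natAdd ha (by omega) β
    fun i j => h _ _ (by simp) (by simp)

lemma Contains.of_directSum {m n b : ℕ} {σ : Equiv.Perm (Fin m)} {τ : Equiv.Perm (Fin n)}
    {β : Equiv.Perm (Fin b)} (hβ : ¬ SumDecomposable β) (h : Contains (directSum σ τ) β) :
    Contains σ β ∨ Contains τ β := by
  obtain ⟨f, hf, hocc⟩ := h
  obtain ⟨a, hab, hcut⟩ := exists_cut_of_monotone hf.monotone m
  rcases Nat.eq_zero_or_pos a with rfl | ha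
  · refine .inr (contains_of_forall_mem_range (Fin.strictMono_natAdd m) (Fin.strictMono_natAdd m)
      (directSum_natAdd σ τ) hf hocc fun i => ?_)
    have := (hcut i).not.mp (Nat.not_lt_zero _)
    exact ⟨⟨f i - m, by omega⟩, Fin.ext (by simp; omega)⟩
  rcases hab.eq_or_lt with rfl | hab
  · exact .inl (contains_of_forall_mem_range (Fin.strictMono_castAdd n)
      (Fin.strictMono_castAdd n) (directSum_castAdd σ τ) hf hocc
      fun i => ⟨⟨f i, (hcut i).mp i.2⟩, rfl⟩)
  refine absurd (sumDecomposable_of_forall_lt ha hab β fun i j hi hj => ?_) hβ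
  rw [hocc, Fin.lt_def]
  have hi' := (directSum_val_lt_iff σ τ (f i)).mpr ((hcut i).mp hi)
  have hj' := (directSum_val_lt_iff σ τ (f j)).not.mpr ((hcut j).not.mp (by omega))
  omega

lemma not_contains_directSum {m n b : ℕ} {σ : Equiv.Perm (Fin m)} {τ : Equiv.Perm (Fin n)}
    {β : Equiv.Perm (Fin b)} (hβ : ¬ SumDecomposable β) (hσ : ¬ Contains σ β)
    (hτ : ¬ Contains τ β) : ¬ Contains (directSum σ τ) β :=
  fun h => (Contains.of_directSum hβ h).elim hσ hτ

lemma not_contains_one {n b : ℕ} {β : Equiv.Perm (Fin b)} (hb : 2 ≤ b)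
    (hβ : ¬ SumDecomposable β) : ¬ Contains (1 : Equiv.Perm (Fin n)) β := by
  rintro ⟨f, hf, hocc⟩
  refine hβ (sumDecomposable_of_forall_lt one_pos hb β fun i j hi hj => ?_)
  rw [hocc, Equiv.Perm.one_apply, Equiv.Perm.one_apply]
  exact hf (Fin.lt_def.mpr (by omega))

lemma contains_of_le_one {n k : ℕ} (hk : k ≤ 1) (hkn : k ≤ n) (π : Equiv.Perm (Fin n))
    (σ : Equiv.Perm (Fin k)) : Contains π σ := by
  have : Subsingleton (Fin k) := Fin.subsingleton_iff_le_one.mpr hk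
  refine ⟨Fin.castLE hkn, Fin.strictMono_castLE hkn, fun i j => ?_⟩
  simp [Subsingleton.elim i j]

lemma avICountSet_eq_zero {B : Set ((k : ℕ) × Equiv.Perm (Fin k))}
    {β : (k : ℕ) × Equiv.Perm (Fin k)} (hβB : β ∈ B) (hβ : β.1 ≤ 1) {n : ℕ} (hn : 1 ≤ n) :
    avICountSet B n = 0 := by
  rw [avICountSet, Nat.card_eq_zero]
  exact .inl ⟨fun π => π.2.2 β hβB (contains_of_le_one hβ (hβ.trans hn) _ _)⟩

lemma avICountSet_pos {B : Set ((k : ℕ) × Equiv.Perm (Fin k))} (hB2 : ∀ β ∈ B, 2 ≤ β.1)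
    (hB : ∀ β ∈ B, ¬ SumDecomposable β.2) (n : ℕ) : 0 < avICountSet B n :=
  have : Nonempty {π : Equiv.Perm (Fin n) // IsInvolution π ∧ ∀ β ∈ B, ¬ Contains π β.2} :=
    ⟨⟨1, inv_one, fun β hβ => not_contains_one (hB2 β hβ) (hB β hβ)⟩⟩
  Nat.card_pos

lemma avICountSet_mul_le {B : Set ((k : ℕ) × Equiv.Perm (Fin k))}
    (hB : ∀ β ∈ B, ¬ SumDecomposable β.2) (m n : ℕ) :
    avICountSet B m * avICountSet B n ≤ avICountSet B (m + n) := by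
  rw [avICountSet, avICountSet, avICountSet, ← Nat.card_prod]
  refine Nat.card_le_card_of_injective (fun x => ⟨directSum x.1.1 x.2.1,
    x.1.2.1.directSum x.2.2.1, fun β hβ => not_contains_directSum (hB β hβ)
      (x.1.2.2 β hβ) (x.2.2.2 β hβ)⟩) fun x x' h => ?_
  obtain ⟨h1, h2⟩ := directSum_inj.mp congr(Subtype.val $h)
  exact Prod.ext (Subtype.ext h1) (Subtype.ext h2)

open Filter Topology in
/-- Fekete's lemma, applied to `-log (a n)`. -/
theorem exists_tendsto_rpow_inv_of_supermultiplicative {a : ℕ → ℕ} {K : ℝ}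
    (hpos : ∀ n, 0 < a n) (hmul : ∀ m n, a m * a n ≤ a (m + n)) (hbound : ∀ n, (a n : ℝ) ≤ K ^ n) :
    ∃ L : ℝ, Tendsto (fun n : ℕ => (a n : ℝ) ^ ((n : ℝ)⁻¹)) atTop (𝓝 L) := by
  have hapos : ∀ n, (0 : ℝ) < a n := fun n => Nat.cast_pos.mpr (hpos n)
  have hK : 1 ≤ K := by simpa using (Nat.one_le_cast.mpr (hpos 1)).trans (hbound 1)
  have hsub : Subadditive fun n => -Real.log (a n) := fun m n => by
    have : Real.log (a m * a n) ≤ Real.log (a (m + n)) :=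
      Real.log_le_log (mul_pos (hapos m) (hapos n)) (by exact_mod_cast hmul m n)
    rw [Real.log_mul (hapos m).ne' (hapos n).ne'] at this
    linarith
  have hbdd : BddBelow (Set.range fun n : ℕ => -Real.log (a n) / n) := by
    refine ⟨-Real.log K, Set.forall_mem_range.mpr fun n => ?_⟩
    rcases Nat.eq_zero_or_pos n with rfl | hn
    · simpa using Real.log_nonneg hK
    have hlog : Real.log (a n) ≤ n * Real.log K := by
      rw [← Real.log_pow]; exact Real.log_le_log (hapos n) (hbound n)
    rw [le_div_iff₀ (by exact_mod_cast hn)]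
    linarith
  refine ⟨Real.exp (-hsub.lim), ((Real.continuous_exp.comp continuous_neg).tendsto _ |>.comp
    (hsub.tendsto_lim hbdd)).congr' ?_⟩
  filter_upwards [eventually_ne_atTop 0] with n hn
  simp [Real.rpow_def_of_pos (hapos n), div_eq_mul_inv]

/-- A 0-1 matrix is encoded by the finite set of positions `(row, column)` of its 1-entries. -/
def MatrixContains {k : ℕ} (S : Finset (ℕ × ℕ)) (Q : Equiv.Perm (Fin k)) : Prop :=
  ∃ f g : Fin k → ℕ, StrictMono f ∧ StrictMono g ∧ ∀ i, (f i, g (Q i)) ∈ S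

section MatrixContains

variable {k : ℕ} {S : Finset (ℕ × ℕ)} {Q : Equiv.Perm (Fin k)}

lemma MatrixContains.transpose (h : MatrixContains S Q) :
    MatrixContains (S.image Prod.swap) Q⁻¹ := by
  obtain ⟨f, g, hf, hg, hS⟩ := h
  exact ⟨g, f, hg, hf, fun j => mem_image.mpr ⟨_, by simpa using hS (Q⁻¹ j), rfl⟩⟩

lemma not_matrixContains_transpose (h : ¬ MatrixContains S Q) :
    ¬ MatrixContains (S.image Prod.swap) Q⁻¹ := fun hT => h <| by
  simpa [image_image] using hT.transpose

variable (s : ℕ)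

def blockContract (S : Finset (ℕ × ℕ)) : Finset (ℕ × ℕ) :=
  S.image fun p => (p.1 / s, p.2 / s)

def blockOf (S : Finset (ℕ × ℕ)) (b : ℕ × ℕ) : Finset (ℕ × ℕ) :=
  S.filter fun p => (p.1 / s, p.2 / s) = b

def blockCells (b : ℕ × ℕ) : Finset (ℕ × ℕ) :=
  Ico (b.1 * s) (b.1 * s + s) ×ˢ Ico (b.2 * s) (b.2 * s + s)

variable {s}

lemma mem_Ico_of_div_eq (hs : 0 < s) {r I : ℕ} (h : r / s = I) : r ∈ Ico (I * s) (I * s + s) := by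
  rw [Nat.div_eq_iff hs] at h
  exact mem_Ico.mpr ⟨h.1, by omega⟩

lemma card_blockCells (b : ℕ × ℕ) : #(blockCells s b) = s * s := by
  simp [blockCells]

lemma blockOf_subset_blockCells (hs : 0 < s) (b : ℕ × ℕ) : blockOf s S b ⊆ blockCells s b :=
  fun p hp => by
    obtain ⟨-, hpb⟩ := mem_filter.mp hp
    exact mem_product.mpr ⟨mem_Ico_of_div_eq hs congr($hpb.1), mem_Ico_of_div_eq hs congr($hpb.2)⟩

lemma MatrixContains.of_blockContract (h : MatrixContains (blockContract s S) Q) :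
    MatrixContains S Q := by
  obtain ⟨f, g, hf, hg, hS⟩ := h
  have hp : ∀ i, ∃ p ∈ S, p.1 / s = f i ∧ p.2 / s = g (Q i) := fun i => by
    obtain ⟨p, hp, hpi⟩ := mem_image.mp (hS i)
    exact ⟨p, hp, congr($hpi.1), congr($hpi.2)⟩
  choose p hpS hp1 hp2 using hp
  refine ⟨fun i => (p i).1, fun j => (p (Q⁻¹ j)).2, fun i i' hi => ?_, fun j j' hj => ?_, ?_⟩
  · exact Nat.lt_of_div_lt_div (by rw [hp1, hp1]; exact hf hi)
  · exact Nat.lt_of_div_lt_div (by rw [hp2, hp2]; simpa using hg hj)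
  · simpa using hpS

lemma blockContract_subset {n m : ℕ} (hn : n ≤ s * m) (hS : S ⊆ range n ×ˢ range n) :
    blockContract s S ⊆ range m ×ˢ range m := by
  intro b hb
  obtain ⟨p, hp, rfl⟩ := mem_image.mp hb
  obtain ⟨h1, h2⟩ := mem_product.mp (hS hp)
  simp only [mem_product, mem_range] at h1 h2 ⊢
  exact ⟨Nat.div_lt_of_lt_mul (by omega), Nat.div_lt_of_lt_mul (by omega)⟩

end MatrixContains

section MarcusTardos

def wideBlocks (s k : ℕ) (S : Finset (ℕ × ℕ)) : Finset (ℕ × ℕ) :=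
  (blockContract s S).filter fun b => k ≤ #((blockOf s S b).image Prod.snd)

variable {k s : ℕ} {S : Finset (ℕ × ℕ)} {Q : Equiv.Perm (Fin k)}

/-- Fewer than `k` block rows can all have entries in every column of a `k`-set `t`: otherwise
one entry per block row, in the columns of `t` permuted by `Q`, is a copy of `Q`. -/
lemma card_filter_subset_image_snd_lt (hav : ¬ MatrixContains S Q) {t : Finset ℕ} (ht : #t = k)
    (R : Finset ℕ) : #(R.filter fun I => t ⊆ (S.filter (·.1 / s = I)).image Prod.snd) < k := by
  by_contra! hR
  obtain ⟨F, hF, hFk⟩ := exists_subset_card_eq hR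
  have hp : ∀ i, ∃ p ∈ S, p.1 / s = F.orderEmbOfFin hFk i ∧ p.2 = t.orderEmbOfFin ht (Q i) := by
    intro i
    have hsub := (mem_filter.mp (hF (F.orderEmbOfFin_mem hFk i))).2
    obtain ⟨p, hp, hp2⟩ := mem_image.mp (hsub (t.orderEmbOfFin_mem ht (Q i)))
    exact ⟨p, (mem_filter.mp hp).1, (mem_filter.mp hp).2, hp2⟩
  choose p hpS hp1 hp2 using hp
  refine hav ⟨fun i => (p i).1, t.orderEmbOfFin ht, fun i i' hi => ?_,
    (t.orderEmbOfFin ht).strictMono, fun i => by simpa [← hp2] using hpS i⟩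
  exact Nat.lt_of_div_lt_div (by rw [hp1, hp1]; exact (F.orderEmbOfFin hFk).strictMono hi)

lemma card_wideBlocks_filter_snd_le (hs : 0 < s) (hav : ¬ MatrixContains S Q) (J : ℕ) :
    #((wideBlocks s k S).filter (·.2 = J)) ≤ (k - 1) * s.choose k := by
  set rowsWith := fun t : Finset ℕ =>
    ((wideBlocks s k S).image Prod.fst).filter fun I => t ⊆ (S.filter (·.1 / s = I)).image Prod.snd
  calc #((wideBlocks s k S).filter (·.2 = J))
      ≤ #(((Ico (J * s) (J * s + s)).powersetCard k).biUnion rowsWith) := by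
        refine card_le_card_of_injOn Prod.fst (fun b hb => ?_) fun b hb b' hb' h => ?_
        · obtain ⟨hbW, rfl⟩ := mem_filter.mp hb
          obtain ⟨t, ht, htk⟩ := exists_subset_card_eq (mem_filter.mp hbW).2
          refine mem_biUnion.mpr ⟨t, mem_powersetCard.mpr ⟨fun c hc => ?_, htk⟩, ?_⟩
          · obtain ⟨p, hp, rfl⟩ := mem_image.mp (ht hc)
            exact mem_Ico_of_div_eq hs congr($((mem_filter.mp hp).2).2)
          refine mem_filter.mpr ⟨mem_image_of_mem _ hbW, ht.trans (image_subset_image ?_)⟩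
          exact fun p hp => mem_filter.mpr ⟨(mem_filter.mp hp).1, congr($((mem_filter.mp hp).2).1)⟩
        · exact Prod.ext h ((mem_filter.mp hb).2.trans (mem_filter.mp hb').2.symm)
    _ ≤ ∑ t ∈ (Ico (J * s) (J * s + s)).powersetCard k, #(rowsWith t) := card_biUnion_le
    _ ≤ ∑ _t ∈ (Ico (J * s) (J * s + s)).powersetCard k, (k - 1) := by
        refine sum_le_sum fun t ht => ?_
        have := card_filter_subset_image_snd_lt (s := s) hav (mem_powersetCard.mp ht).2
          ((wideBlocks s k S).image Prod.fst)
        exact Nat.le_sub_one_of_lt this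
    _ = (k - 1) * s.choose k := by simp [mul_comm]

lemma card_wideBlocks_le (hs : 0 < s) (hav : ¬ MatrixContains S Q) {n m : ℕ} (hn : n ≤ s * m)
    (hS : S ⊆ range n ×ˢ range n) : #(wideBlocks s k S) ≤ (k - 1) * s.choose k * m := by
  rw [← card_range m]
  refine card_le_mul_card_image_of_maps_to (fun b hb => ?_) _
    fun J _ => card_wideBlocks_filter_snd_le hs hav J
  exact (mem_product.mp (blockContract_subset hn hS (mem_filter.mp hb).1)).2

lemma card_blockOf_le (hs : 0 < s) {b : ℕ × ℕ} (hb : b ∈ blockContract s S) :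
    #(blockOf s S b) ≤ (k - 1) ^ 2 + (if b ∈ wideBlocks s k S then s ^ 2 else 0)
      + (if b.swap ∈ wideBlocks s k (S.image Prod.swap) then s ^ 2 else 0) := by
  set rows := (blockOf s S b).image Prod.fst
  set cols := (blockOf s S b).image Prod.snd
  have hrc : #(blockOf s S b) ≤ #rows * #cols := by
    rw [← card_product]
    exact card_le_card fun p hp => mem_product.mpr ⟨mem_image_of_mem _ hp, mem_image_of_mem _ hp⟩
  have hcells : #(blockOf s S b) ≤ s ^ 2 := by
    simpa [card_blockCells, sq] using card_le_card (blockOf_subset_blockCells hs b)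
  have hrows : #rows ≤ #((blockOf s (S.image Prod.swap) b.swap).image Prod.snd) := by
    refine card_le_card fun r hr => ?_
    obtain ⟨p, hp, rfl⟩ := mem_image.mp hr
    obtain ⟨hpS, hpb⟩ := mem_filter.mp hp
    exact mem_image.mpr ⟨p.swap, mem_filter.mpr ⟨mem_image_of_mem _ hpS, by simp [← hpb]⟩, rfl⟩
  have hswap : b.swap ∈ blockContract s (S.image Prod.swap) := by
    obtain ⟨p, hp, rfl⟩ := mem_image.mp hb
    exact mem_image.mpr ⟨p.swap, mem_image_of_mem _ hp, rfl⟩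
  by_cases hw : k ≤ #cols
  · rw [if_pos (show b ∈ wideBlocks s k S from mem_filter.mpr ⟨hb, hw⟩)]
    omega
  by_cases ht : k ≤ #rows
  · rw [if_pos (show b.swap ∈ wideBlocks s k _ from mem_filter.mpr ⟨hswap, ht.trans hrows⟩)]
    omega
  have : #rows * #cols ≤ (k - 1) ^ 2 := by
    rw [sq]; exact Nat.mul_le_mul (by omega) (by omega)
  omega

lemma card_le_blockContract_add_wideBlocks (hs : 0 < s) (S : Finset (ℕ × ℕ)) :
    #S ≤ (k - 1) ^ 2 * #(blockContract s S) + s ^ 2 * #(wideBlocks s k S)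
      + s ^ 2 * #(wideBlocks s k (S.image Prod.swap)) := by
  set T := blockContract s S
  calc #S = ∑ b ∈ T, #(blockOf s S b) :=
        card_eq_sum_card_fiberwise fun p hp => mem_image_of_mem _ hp
    _ ≤ ∑ b ∈ T, ((k - 1) ^ 2 + (if b ∈ wideBlocks s k S then s ^ 2 else 0)
          + (if b.swap ∈ wideBlocks s k (S.image Prod.swap) then s ^ 2 else 0)) :=
        sum_le_sum fun b hb => card_blockOf_le hs hb
    _ = (k - 1) ^ 2 * #T + s ^ 2 * #(T.filter (· ∈ wideBlocks s k S))
          + s ^ 2 * #(T.filter (·.swap ∈ wideBlocks s k (S.image Prod.swap))) := by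
        simp only [sum_add_distrib, sum_ite, sum_const_zero, sum_const, smul_eq_mul]
        ring
    _ ≤ _ := by
        have hW : #(T.filter (· ∈ wideBlocks s k S)) ≤ #(wideBlocks s k S) :=
          card_le_card fun b hb => (mem_filter.mp hb).2
        have hW' : #(T.filter (·.swap ∈ wideBlocks s k (S.image Prod.swap)))
            ≤ #(wideBlocks s k (S.image Prod.swap)) :=
          card_le_card_of_injOn Prod.swap (fun b hb => (mem_filter.mp hb).2)
            Prod.swap_injective.injOn
        exact Nat.add_le_add (Nat.add_le_add_left (Nat.mul_le_mul_left _ hW) _)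
          (Nat.mul_le_mul_left _ hW')

def marcusTardosConst (k : ℕ) : ℕ := 2 * k ^ 4 * ((k - 1) * (k ^ 2).choose k)

lemma image_swap_subset_range_product {n : ℕ} (hS : S ⊆ range n ×ˢ range n) :
    S.image Prod.swap ⊆ range n ×ˢ range n := by
  intro p hp
  obtain ⟨q, hq, rfl⟩ := mem_image.mp hp
  simpa [and_comm] using hS hq

/-- The Füredi–Hajnal conjecture, proved by Marcus and Tardos: contracting blocks of side
`s = k²` gives an avoider with about `n / s` rows, while only `O(n / s)` blocks are wide or tall. -/
theorem card_le_marcusTardosConst_mul (hk : 2 ≤ k) {n : ℕ} (hS : S ⊆ range n ×ˢ range n)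
    (hav : ¬ MatrixContains S Q) : #S ≤ marcusTardosConst k * n := by
  induction n using Nat.strong_induction_on generalizing S with
  | _ n ih =>
  set c := marcusTardosConst k
  have hc : k ^ 4 ≤ c := by
    have : 1 ≤ (k - 1) * (k ^ 2).choose k :=
      Nat.mul_pos (by omega) (Nat.choose_pos (by nlinarith))
    calc k ^ 4 ≤ 2 * k ^ 4 * 1 := by omega
      _ ≤ c := Nat.mul_le_mul_left _ this
  by_cases hn : n ≤ k ^ 4
  · calc #S ≤ n * n := by simpa using card_le_card hS
      _ ≤ c * n := Nat.mul_le_mul_right _ (hn.trans hc)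
  set s := k ^ 2
  set m := n / s + 1
  have hs : 0 < s := by positivity
  have hnm : n ≤ s * m := (Nat.lt_mul_div_succ n hs).le
  have hm : ((k - 1) ^ 2 + 1) * m ≤ n := by
    have hq : s ≤ n / s := (Nat.le_div_iff_mul_le hs).mpr (by simp only [s]; nlinarith)
    have hqs : n / s * s ≤ n := Nat.div_mul_le_self n s
    obtain ⟨E, rfl⟩ : ∃ E, k = E + 1 := ⟨k - 1, by omega⟩
    simp only [s, m, Nat.add_sub_cancel] at hq hqs ⊢
    nlinarith
  have hmn : m < n := by
    have : 1 ≤ (k - 1) ^ 2 := Nat.one_le_pow _ _ (by omega)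
    have : 2 * m ≤ n := (Nat.mul_le_mul_right m (by omega)).trans hm
    have : 1 ≤ m := Nat.le_add_left 1 _
    omega
  have hT := ih m hmn (blockContract_subset hnm hS) fun h => hav h.of_blockContract
  have hW := card_wideBlocks_le hs hav hnm hS
  have hW' := card_wideBlocks_le hs (not_matrixContains_transpose hav) hnm
    (image_swap_subset_range_product hS)
  calc #S ≤ (k - 1) ^ 2 * #(blockContract s S) + s ^ 2 * #(wideBlocks s k S)
        + s ^ 2 * #(wideBlocks s k (S.image Prod.swap)) :=
        card_le_blockContract_add_wideBlocks hs S
    _ ≤ (k - 1) ^ 2 * (c * m) + s ^ 2 * ((k - 1) * s.choose k * m)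
        + s ^ 2 * ((k - 1) * s.choose k * m) := by gcongr
    _ = c * (((k - 1) ^ 2 + 1) * m) := by simp only [c, marcusTardosConst, s]; ring
    _ ≤ c * n := Nat.mul_le_mul_left _ hm

end MarcusTardos

section Klazar

variable {k : ℕ} (Q : Equiv.Perm (Fin k))

open Classical in
noncomputable def matrixAvoiders (n : ℕ) : Finset (Finset (ℕ × ℕ)) :=
  (range n ×ˢ range n).powerset.filter fun S => ¬ MatrixContains S Q

variable {Q}

lemma mem_matrixAvoiders {n : ℕ} {S : Finset (ℕ × ℕ)} :
    S ∈ matrixAvoiders Q n ↔ S ⊆ range n ×ˢ range n ∧ ¬ MatrixContains S Q := by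
  simp [matrixAvoiders]

/-- Klazar's reduction: an avoider is determined by its block contraction, again an avoider, and
by a subset of the cells of the blocks of the contraction, of which there are linearly many. -/
lemma card_matrixAvoiders_le_mul (hk : 2 ≤ k) {s : ℕ} (hs : 0 < s) {n m : ℕ} (hn : n ≤ s * m) :
    #(matrixAvoiders Q n) ≤ 2 ^ (s ^ 2 * (marcusTardosConst k * m)) * #(matrixAvoiders Q m) := by
  refine card_le_mul_card_image_of_maps_to (f := blockContract s) (fun S hS => ?_) _ fun T hT => ?_
  · rw [mem_matrixAvoiders] at hS ⊢
    exact ⟨blockContract_subset hn hS.1, fun h => hS.2 h.of_blockContract⟩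
  have hfiber : (matrixAvoiders Q n).filter (blockContract s · = T)
      ⊆ (T.biUnion (blockCells s)).powerset := by
    intro S hS
    obtain ⟨-, rfl⟩ := mem_filter.mp hS
    exact mem_powerset.mpr fun p hp => mem_biUnion.mpr ⟨_, mem_image_of_mem _ hp,
      blockOf_subset_blockCells hs _ (mem_filter.mpr ⟨hp, rfl⟩)⟩
  have hcells : #(T.biUnion (blockCells s)) ≤ s ^ 2 * (marcusTardosConst k * m) :=
    calc #(T.biUnion (blockCells s)) ≤ ∑ b ∈ T, #(blockCells s b) := card_biUnion_le
      _ = s ^ 2 * #T := by simp [card_blockCells, sq, mul_comm]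
      _ ≤ _ := Nat.mul_le_mul_left _ (card_le_marcusTardosConst_mul hk
          (mem_matrixAvoiders.mp hT).1 (mem_matrixAvoiders.mp hT).2)
  calc _ ≤ 2 ^ #(T.biUnion (blockCells s)) := by simpa using card_le_card hfiber
    _ ≤ _ := Nat.pow_le_pow_right two_pos hcells

variable (Q) in
/-- The Stanley–Wilf conjecture, for 0-1 matrices. -/
theorem card_matrixAvoiders_le_pow (hk : 2 ≤ k) (n : ℕ) :
    #(matrixAvoiders Q n) ≤ (16 ^ (2 * marcusTardosConst k + 1)) ^ n := by
  induction n using Nat.strong_induction_on with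
  | _ n ih =>
  set c := marcusTardosConst k
  rcases Nat.lt_or_ge n 2 with hn | hn
  · calc #(matrixAvoiders Q n) ≤ #((range n ×ˢ range n).powerset) :=
          card_le_card fun S hS => mem_powerset.mpr (mem_matrixAvoiders.mp hS).1
      _ = 2 ^ n := by interval_cases n <;> simp
      _ ≤ _ := Nat.pow_le_pow_left ((by norm_num : 2 ≤ 16).trans (Nat.le_self_pow (by omega) 16)) n
  set m := (n + 1) / 2
  have h3m : 3 * m ≤ 2 * n := by omega
  calc #(matrixAvoiders Q n) ≤ 2 ^ (2 ^ 2 * (c * m)) * #(matrixAvoiders Q m) :=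
        card_matrixAvoiders_le_mul hk two_pos (by omega)
    _ ≤ 16 ^ (c * m) * (16 ^ (2 * c + 1)) ^ m := by
        rw [pow_mul 2 (2 ^ 2)]
        exact Nat.mul_le_mul_left _ (ih m (by omega))
    _ ≤ (16 ^ (2 * c + 1)) ^ n := by
        rw [← pow_mul, ← pow_mul, ← pow_add]
        exact Nat.pow_le_pow_right (by norm_num) (by nlinarith [Nat.mul_le_mul_left c h3m])

end Klazar

section PermutationMatrix

variable {n : ℕ}

def permCells (π : Equiv.Perm (Fin n)) : Finset (ℕ × ℕ) :=
  univ.image fun i : Fin n => ((i : ℕ), (π i : ℕ))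

lemma permCells_subset (π : Equiv.Perm (Fin n)) : permCells π ⊆ range n ×ˢ range n := by
  intro p hp
  obtain ⟨i, -, rfl⟩ := mem_image.mp hp
  simp

lemma permCells_injective : Function.Injective (permCells (n := n)) := by
  intro π π' h
  ext i
  have : ((i : ℕ), (π i : ℕ)) ∈ permCells π' := h ▸ mem_image_of_mem _ (mem_univ i)
  obtain ⟨j, -, hj⟩ := mem_image.mp this
  obtain ⟨hji, hπ⟩ := Prod.mk.inj hj
  rw [← hπ, Fin.ext hji]

lemma Contains.of_matrixContains_permCells {k : ℕ} {π : Equiv.Perm (Fin n)}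
    {β : Equiv.Perm (Fin k)} (h : MatrixContains (permCells π) β) : Contains π β := by
  obtain ⟨f, g, hf, hg, hS⟩ := h
  have hx : ∀ i, ∃ x : Fin n, (x : ℕ) = f i ∧ (π x : ℕ) = g (β i) := fun i => by
    obtain ⟨x, -, hx⟩ := mem_image.mp (hS i)
    exact ⟨x, congr($hx.1), congr($hx.2)⟩
  choose x hx1 hx2 using hx
  refine ⟨x, fun i j hij => ?_, fun i j => ?_⟩
  · rw [Fin.lt_def, hx1, hx1]; exact hf hij
  · rw [← hg.lt_iff_lt, ← hx2, ← hx2, Fin.lt_def]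

lemma avICountSet_le_card_matrixAvoiders {B : Set ((k : ℕ) × Equiv.Perm (Fin k))}
    {β : (k : ℕ) × Equiv.Perm (Fin k)} (hβ : β ∈ B) (n : ℕ) :
    avICountSet B n ≤ #(matrixAvoiders β.2 n) := by
  rw [avICountSet, ← Nat.card_eq_finsetCard]
  refine Nat.card_le_card_of_injective (fun π => ⟨permCells π.1, mem_matrixAvoiders.mpr
    ⟨permCells_subset _, fun h => π.2.2 β hβ (.of_matrixContains_permCells h)⟩⟩) fun π π' h => ?_
  exact Subtype.ext (permCells_injective congr(Subtype.val $h))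

end PermutationMatrix

/-- If every permutation in the nonempty set `B` is sum indecomposable, then the set of
involutions avoiding every element of `B` has a proper (finite) growth rate. -/
theorem avI_growth_rate_exists (B : Set ((k : ℕ) × Equiv.Perm (Fin k)))
    (hne : B.Nonempty) (hB : ∀ β ∈ B, ¬ SumDecomposable β.2) :
    ∃ L : ℝ, Filter.Tendsto (fun n : ℕ => (avICountSet B n : ℝ) ^ ((n : ℝ)⁻¹))
      Filter.atTop (nhds L) := by
  by_cases hshort : ∃ β ∈ B, β.1 ≤ 1
  · obtain ⟨β, hβB, hβ⟩ := hshort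
    refine ⟨0, tendsto_const_nhds.congr' ?_⟩
    filter_upwards [Filter.eventually_ge_atTop 1] with n hn
    rw [avICountSet_eq_zero hβB hβ hn, Nat.cast_zero, Real.zero_rpow (by positivity)]
  push Not at hshort
  obtain ⟨β, hβB⟩ := hne
  refine exists_tendsto_rpow_inv_of_supermultiplicative (avICountSet_pos hshort hB)
    (avICountSet_mul_le hB) (K := (16 ^ (2 * marcusTardosConst β.1 + 1) : ℕ)) fun n => ?_
  exact_mod_cast (avICountSet_le_card_matrixAvoiders hβB n).trans
    (card_matrixAvoiders_le_pow β.2 (hshort β hβB) n)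
end

section
/- Let β be a skew indecomposable involution. Then limsup_{n→∞} |Av^I_n(β)|^{1/n} ≥ (limsup_{n→∞} |Av_n(β)|^{1/n})^{1/2}. In particular, the upper growth rate of the β-avoiding involutions is at least the square root of the Stanley–Wilf limit of the β-avoiding permutations. -/
/-! The map `π ↦ π ⊖ π⁻¹` injects `Av_n(β)` into `Av^I_{2n}(β)`. The skew sum is an involution,
and an occurrence of `β` in it either lies in one summand (and `β` occurs in `π⁻¹` iff it occurs
in `π`, since `β = β⁻¹`) or meets both, which forces `β` to be skew decomposable. Hence
`|Av_n(β)|^{1/(2n)} ≤ |Av^I_{2n}(β)|^{1/(2n)}`, and the limsup along even lengths gives the bound. -/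

section SkewSum

variable {m n : ℕ} (σ : Equiv.Perm (Fin m)) (τ : Equiv.Perm (Fin n))

@[simp]
lemma val_skewSum_castAdd (x : Fin m) : (skewSum σ τ (Fin.castAdd n x) : ℕ) = n + σ x := by
  simp [skewSum, add_comm]

@[simp]
lemma val_skewSum_natAdd (y : Fin n) : (skewSum σ τ (Fin.natAdd m y) : ℕ) = τ y := by
  simp [skewSum]

lemma val_skewSum_of_lt {x : Fin (m + n)} (hx : (x : ℕ) < m) :
    (skewSum σ τ x : ℕ) = n + σ ⟨x, hx⟩ :=
  val_skewSum_castAdd σ τ ⟨x, hx⟩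

lemma val_skewSum_of_le {x : Fin (m + n)} (hx : m ≤ (x : ℕ)) :
    (skewSum σ τ x : ℕ) = τ ⟨x - m, by omega⟩ := by
  have hx' : x = Fin.natAdd m ⟨x - m, by omega⟩ := by ext; simp only [Fin.val_natAdd]; omega
  conv_lhs => rw [hx']
  exact val_skewSum_natAdd σ τ _

lemma skewDecomposable_skewSum (hm : 0 < m) (hn : 0 < n) : SkewDecomposable (skewSum σ τ) :=
  ⟨m, n, rfl, hm, hn, σ, τ, Equiv.ext fun _ => rfl⟩

end SkewSum

lemma isInvolution_skewSum_self_inv {n : ℕ} (π : Equiv.Perm (Fin n)) :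
    IsInvolution (skewSum π π⁻¹) := by
  refine inv_eq_of_mul_eq_one_left (Equiv.ext fun x => ?_)
  induction x using Fin.addCases with
  | left x => ext; simp [val_skewSum_of_le]
  | right y =>
    have hy : skewSum π π⁻¹ (Fin.natAdd n y) = Fin.castAdd n (π⁻¹ y) :=
      Fin.ext (val_skewSum_natAdd π π⁻¹ y)
    rw [Equiv.Perm.mul_apply, hy]
    ext
    simp only [val_skewSum_castAdd, Equiv.Perm.coe_inv, Equiv.apply_symm_apply,
      Fin.natAdd_eq_addNat, Equiv.Perm.coe_one, id_eq, Fin.val_addNat]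
    omega

lemma Contains.inv {n k : ℕ} {π : Equiv.Perm (Fin n)} {β : Equiv.Perm (Fin k)}
    (h : Contains π β) : Contains π⁻¹ β⁻¹ := by
  obtain ⟨f, hf, hp⟩ := h
  refine ⟨fun i => π (f (β⁻¹ i)), fun i j hij => ?_, fun i j => ?_⟩
  · rw [← hp]
    simpa using hij
  · simp only [Equiv.Perm.inv_def, Equiv.symm_apply_apply]
    exact hf.lt_iff_lt.symm

lemma contains_inv_iff_of_isInvolution {n k : ℕ} {π : Equiv.Perm (Fin n)}
    {β : Equiv.Perm (Fin k)} (hβ : IsInvolution β) : Contains π⁻¹ β ↔ Contains π β := by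
  have hβ' : β⁻¹ = β := hβ
  exact ⟨fun h => by simpa [hβ'] using h.inv, fun h => by simpa [hβ'] using h.inv⟩

lemma exists_lt_iff_of_strictMono {k N : ℕ} {f : Fin k → Fin N} (hf : StrictMono f) (m : ℕ) :
    ∃ a ≤ k, ∀ i : Fin k, (i : ℕ) < a ↔ (f i : ℕ) < m := by
  classical
  set S := Finset.univ.filter fun i : Fin k => (f i : ℕ) < m
  refine ⟨S.card, S.card_le_univ.trans_eq (Fintype.card_fin k),
    fun i => ⟨fun hi => ?_, fun hi => ?_⟩⟩
  · by_contra hfi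
    have : S ⊆ Finset.Iio i := fun j hj => by
      simp only [S, Finset.mem_filter] at hj
      exact Finset.mem_Iio.2 (hf.lt_iff_lt.1 (Fin.lt_def.2 (by omega)))
    have := (Finset.card_le_card this).trans_eq (Fin.card_Iio i)
    omega
  · have : Finset.Iic i ⊆ S := fun j hj => by
      simp only [S, Finset.mem_filter, Finset.mem_univ, true_and]
      exact (Fin.le_def.1 (hf.monotone (Finset.mem_Iic.1 hj))).trans_lt hi
    have := (Fin.card_Iic i).symm.trans_le (Finset.card_le_card this)
    omega

lemma exists_eq_skewSum {m n : ℕ} (π : Equiv.Perm (Fin (m + n)))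
    (hleft : ∀ x : Fin m, n ≤ (π (Fin.castAdd n x) : ℕ))
    (hright : ∀ y : Fin n, (π (Fin.natAdd m y) : ℕ) < n) :
    ∃ (σ : Equiv.Perm (Fin m)) (τ : Equiv.Perm (Fin n)), π = skewSum σ τ := by
  let σ' : Fin m → Fin m := fun x => ⟨π (Fin.castAdd n x) - n, by have := hleft x; omega⟩
  let τ' : Fin n → Fin n := fun y => ⟨π (Fin.natAdd m y), hright y⟩
  have hσ' : σ'.Injective := fun x x' hxx' => by
    have := hleft x; have := hleft x'
    have hval : (π (Fin.castAdd n x) : ℕ) = π (Fin.castAdd n x') := by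
      simp only [σ', Fin.ext_iff] at hxx'; omega
    exact (Fin.strictMono_castAdd n).injective (π.injective (Fin.ext hval))
  have hτ' : τ'.Injective := fun y y' hyy' => by
    have hval : (π (Fin.natAdd m y) : ℕ) = π (Fin.natAdd m y') :=
      Fin.val_eq_of_eq (i := τ' y) hyy'
    exact (Fin.strictMono_natAdd m).injective (π.injective (Fin.ext hval))
  refine ⟨.ofBijective σ' hσ'.bijective_of_finite, .ofBijective τ' hτ'.bijective_of_finite,
    Equiv.ext fun x => ?_⟩
  induction x using Fin.addCases with
  | left x =>
    have := hleft x
    ext; simp only [val_skewSum_castAdd, Equiv.ofBijective_apply, σ']; omega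
  | right y => ext; simp [τ']

lemma skewDecomposable_of_forall_lt {a c : ℕ} (β : Equiv.Perm (Fin (a + c))) (ha : 0 < a)
    (hc : 0 < c) (h : ∀ x y, β (Fin.natAdd a y) < β (Fin.castAdd c x)) : SkewDecomposable β := by
  have hleft : ∀ x : Fin a, c ≤ (β (Fin.castAdd c x) : ℕ) := fun x => by
    simpa using Finset.card_le_card_of_injOn (s := Finset.univ)
      (t := Finset.Iio (β (Fin.castAdd c x))) (fun y => β (Fin.natAdd a y))
      (fun y _ => Finset.mem_Iio.2 (h x y)) (fun y _ y' _ hyy' => by simpa using hyy')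
  have hright : ∀ y : Fin c, (β (Fin.natAdd a y) : ℕ) < c := fun y => by
    have := Finset.card_le_card_of_injOn (s := Finset.univ)
      (t := Finset.Ioi (β (Fin.natAdd a y))) (fun x => β (Fin.castAdd c x))
      (fun x _ => Finset.mem_Ioi.2 (h x y)) (fun x _ x' _ hxx' => by simpa using hxx')
    simp only [Finset.card_univ, Fintype.card_fin, Fin.card_Ioi] at this
    omega
  obtain ⟨σ, τ, rfl⟩ := exists_eq_skewSum β hleft hright
  exact skewDecomposable_skewSum σ τ ha hc

lemma Contains.of_skewSum {m n k : ℕ} {σ : Equiv.Perm (Fin m)} {τ : Equiv.Perm (Fin n)}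
    {β : Equiv.Perm (Fin k)} (h : Contains (skewSum σ τ) β) :
    Contains σ β ∨ Contains τ β ∨ SkewDecomposable β := by
  obtain ⟨f, hf, hp⟩ := h
  obtain ⟨a, hak, hsplit⟩ := exists_lt_iff_of_strictMono hf m
  rcases Nat.eq_zero_or_pos a with rfl | ha
  · have hle : ∀ i, m ≤ (f i : ℕ) := fun i => not_lt.1 fun hi => by simpa using (hsplit i).2 hi
    refine Or.inr (Or.inl ⟨fun i => ⟨f i - m, by have := (f i).isLt; have := hle i; omega⟩,
      fun i j hij => ?_, fun i j => ?_⟩)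
    · have := Fin.lt_def.1 (hf hij)
      have := hle i
      exact Fin.lt_def.2 (by dsimp only; omega)
    · rw [hp, Fin.lt_def, Fin.lt_def, val_skewSum_of_le σ τ (hle i), val_skewSum_of_le σ τ (hle j)]
  obtain rfl | hak := hak.eq_or_lt
  · have hlt : ∀ i : Fin a, (f i : ℕ) < m := fun i => (hsplit i).1 i.isLt
    refine Or.inl ⟨fun i => ⟨f i, hlt i⟩, fun i j hij => hf hij, fun i j => ?_⟩
    dsimp only
    rw [hp, Fin.lt_def, Fin.lt_def, val_skewSum_of_lt σ τ (hlt i), val_skewSum_of_lt σ τ (hlt j)]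
    omega
  obtain ⟨c, rfl⟩ : ∃ c, k = a + c := ⟨k - a, by omega⟩
  refine Or.inr (Or.inr (skewDecomposable_of_forall_lt β ha (by omega) fun x y => ?_))
  have hx : (f (Fin.castAdd c x) : ℕ) < m := (hsplit _).1 x.isLt
  have hy : m ≤ (f (Fin.natAdd a y) : ℕ) := not_lt.1 fun h => by simpa using (hsplit _).2 h
  rw [hp, Fin.lt_def, val_skewSum_of_lt σ τ hx, val_skewSum_of_le σ τ hy]
  omega

lemma avCount_le_avICount_add_self {k : ℕ} {β : Equiv.Perm (Fin k)} (hβ : IsInvolution β)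
    (hskew : ¬ SkewDecomposable β) (n : ℕ) : avCount β n ≤ avICount β (n + n) := by
  have havoid : ∀ π : Equiv.Perm (Fin n), ¬ Contains π β → ¬ Contains (skewSum π π⁻¹) β :=
    fun π hπ h => by
      rcases h.of_skewSum with h | h | h
      · exact hπ h
      · exact hπ ((contains_inv_iff_of_isInvolution hβ).1 h)
      · exact hskew h
  refine Nat.card_le_card_of_injective
    (fun π => ⟨skewSum π.1 π.1⁻¹, isInvolution_skewSum_self_inv π.1, havoid π.1 π.2⟩)
    fun π π' h => Subtype.ext (Equiv.ext fun x => Fin.ext ?_)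
  have := congrArg (fun ρ : Equiv.Perm (Fin (n + n)) => (ρ (Fin.castAdd n x) : ℕ))
    (congrArg Subtype.val h)
  simpa using this

lemma avICount_le_avCount {k : ℕ} (β : Equiv.Perm (Fin k)) (n : ℕ) :
    avICount β n ≤ avCount β n :=
  Nat.card_le_card_of_injective (fun π => ⟨π.1, π.2.2⟩)
    fun _ _ h => Subtype.ext (Subtype.mk.inj h)

open Filter

lemma limsup_nonneg_of_nonneg {u : ℕ → ℝ} (hu : ∀ n, 0 ≤ u n) : 0 ≤ limsup u atTop := by
  by_cases hb : IsBoundedUnder (· ≤ ·) atTop u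
  · exact le_limsup_of_frequently_le (Frequently.of_forall hu) hb
  · rw [Real.limsup_of_not_isBoundedUnder hb]

lemma sqrt_limsup_le_limsup {u v : ℕ → ℝ} {φ : ℕ → ℕ} (hφ : Tendsto φ atTop atTop)
    (hu : ∀ n, 0 ≤ u n) (hv : ∀ n, 0 ≤ v n) (hvu : ∀ n, v n ≤ u n) (h : ∀ n, √(u n) ≤ v (φ n)) :
    √(limsup u atTop) ≤ limsup v atTop := by
  by_cases hub : IsBoundedUnder (· ≤ ·) atTop u
  · have hvb : IsBoundedUnder (· ≤ ·) atTop v := hub.mono_le (Eventually.of_forall hvu)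
    calc √(limsup u atTop) = limsup (Real.sqrt ∘ u) atTop :=
          Real.sqrt_monotone.map_limsup_of_continuousAt u Real.continuous_sqrt.continuousAt
            hub (isCoboundedUnder_le_of_le atTop hu)
      _ ≤ limsup (v ∘ φ) atTop :=
          limsup_le_limsup (Eventually.of_forall h)
            (isCoboundedUnder_le_of_le atTop fun n => Real.sqrt_nonneg _)
            (hφ.isBoundedUnder_comp hvb)
      _ ≤ limsup v atTop := hφ.limsup_comp_le_limsup (isCoboundedUnder_le_of_le _ hv) hvb
  · -- the real `limsup` of a sequence unbounded above is the junk value `0`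
    rw [Real.limsup_of_not_isBoundedUnder hub, Real.sqrt_zero]
    exact limsup_nonneg_of_nonneg hv

lemma sqrt_rpow_inv_le_rpow_inv_add_self {x y : ℝ} (hx : 0 ≤ x) (hxy : x ≤ y) (n : ℕ) :
    √(x ^ (n : ℝ)⁻¹) ≤ y ^ ((n + n : ℕ) : ℝ)⁻¹ := by
  have hexp : ((n + n : ℕ) : ℝ)⁻¹ = (n : ℝ)⁻¹ * (1 / 2) := by
    push_cast; rw [← two_mul, mul_inv, mul_comm]; norm_num
  rw [Real.sqrt_eq_rpow, ← Real.rpow_mul hx, ← hexp]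
  exact Real.rpow_le_rpow hx hxy (by positivity)

/-- For a skew indecomposable involution `β`, the upper growth rate of `β`-avoiding
involutions is at least the square root of the upper growth rate of `β`-avoiding
permutations. -/
theorem avI_upper_growth_ge_sqrt {b : ℕ} (β : Equiv.Perm (Fin b))
    (hβ : IsInvolution β) (hskew : ¬ SkewDecomposable β) :
    Real.sqrt (Filter.limsup (fun n : ℕ => (avCount β n : ℝ) ^ ((n : ℝ)⁻¹)) Filter.atTop) ≤
      Filter.limsup (fun n : ℕ => (avICount β n : ℝ) ^ ((n : ℝ)⁻¹)) Filter.atTop := by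
  have hφ : Tendsto (fun n : ℕ => n + n) atTop atTop :=
    tendsto_atTop_mono (fun n => Nat.le_add_right n n) tendsto_id
  refine sqrt_limsup_le_limsup hφ (fun n => by positivity) (fun n => by positivity)
    (fun n => ?_) (fun n => ?_)
  · exact Real.rpow_le_rpow (Nat.cast_nonneg _) (Nat.cast_le.2 (avICount_le_avCount β n))
      (by positivity)
  · exact sqrt_rpow_inv_le_rpow_inv_add_self (Nat.cast_nonneg _)
      (Nat.cast_le.2 (avCount_le_avICount_add_self hβ hskew n)) n
end

section
/- Let σ be a simple permutation of length m with σ ≠ 21, and let α₁,…,α_m be nonempty permutations. Then the inflation π = σ[α₁,…,α_m] is an involution if and only if σ is an involution and α_i = α_{σ(i)}^{-1} for all 1 ≤ i ≤ m. -/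
/-!
Let `b` and `v` send a point of `Fin (∑ k)` to the position block, respectively the value block,
containing it, so that `v ∘ π = σ ∘ b` for `π = σ[α]`. If `π` is an involution, each value block
is an interval of `π`, hence the position blocks it meets form an interval of `σ`: by simplicity
either one block or all of them. In the second case the value block contains every inner position
block and, applying `π`, the matching position block contains every inner value block; for
`m ≥ 4` this forces `σ` to send an end point to an end point, and then the complement of that
point is a proper interval of `σ`. So every value block lies in a single position block, the two
block partitions coincide and `σ` preserves the block sizes. Once it does, `π` acts blockwise,
`(i, a) ↦ (σ i, αᵢ a)`, and being an involution becomes the stated condition. The case `m = 3`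
has no simple permutations, and for `m = 2` the only allowed `σ` is the identity.
-/

open Set Function

theorem setContiguous_iff_ordConnected {n : ℕ} {S : Set (Fin n)} :
    SetContiguous S ↔ S.OrdConnected :=
  ⟨fun h => ⟨fun _ hi _ hj _ hk => h hi hj hk.1 hk.2⟩,
    fun h _ _ _ hi hj hik hkj => h.out hi hj ⟨hik, hkj⟩⟩

theorem setContiguous_preimage_singleton {n m : ℕ} {f : Fin n → Fin m} (hf : Monotone f)
    (i : Fin m) : SetContiguous (f ⁻¹' {i}) :=
  setContiguous_iff_ordConnected.2 (ordConnected_singleton.preimage_mono hf)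

theorem SetContiguous.mem_of_lt_of_lt {n : ℕ} {S : Set (Fin n)} (hS : SetContiguous S)
    {β : Type*} [Preorder β] {f : Fin n → β} (hf : Monotone f) {x y z : Fin n} (hx : x ∈ S)
    (hz : z ∈ S) (hxy : f x < f y) (hyz : f y < f z) : y ∈ S :=
  hS hx hz (hf.reflect_lt hxy).le (hf.reflect_lt hyz).le

theorem SetContiguous.image {n m : ℕ} {S : Set (Fin n)} (hS : SetContiguous S)
    {f : Fin n → Fin m} (hf : Monotone f) (hsurj : Surjective f) : SetContiguous (f '' S) := by
  rintro _ _ r ⟨x, hx, rfl⟩ ⟨z, hz, rfl⟩ hxr hrz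
  obtain ⟨y, rfl⟩ := hsurj r
  rcases hxr.eq_or_lt with hxy | hxy
  · exact ⟨x, hx, hxy⟩
  rcases hrz.eq_or_lt with hyz | hyz
  · exact ⟨z, hz, hyz.symm⟩
  exact ⟨y, hS.mem_of_lt_of_lt hf hx hz hxy hyz, rfl⟩

def IsEndpoint {m : ℕ} (i : Fin m) : Prop := (i : ℕ) = 0 ∨ (i : ℕ) + 1 = m

theorem SetContiguous.mem_of_image_eq_univ {N m : ℕ} {S : Set (Fin N)} (hS : SetContiguous S)
    {f : Fin N → Fin m} (hf : Monotone f) (himage : f '' S = univ) {x : Fin N}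
    (hx : ¬ IsEndpoint (f x)) : x ∈ S := by
  have hm : 0 < m := (f x).pos
  obtain ⟨y, hy, hyf⟩ := himage.symm ▸ mem_univ (⟨0, hm⟩ : Fin m)
  obtain ⟨z, hz, hzf⟩ := himage.symm ▸ mem_univ (⟨m - 1, by omega⟩ : Fin m)
  unfold IsEndpoint at hx
  refine hS.mem_of_lt_of_lt hf hy hz ?_ ?_
  · rw [hyf, Fin.lt_def]; dsimp only; omega
  · rw [hzf, Fin.lt_def]; dsimp only; have := (f x).isLt; omega

theorem setContiguous_compl_singleton {m : ℕ} {i : Fin m} (hi : IsEndpoint i) :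
    SetContiguous ({i}ᶜ : Set (Fin m)) := by
  intro p q r hp hq hpr hrq
  simp only [mem_compl_iff, mem_singleton_iff, Fin.ext_iff, Fin.le_def] at hp hq hpr hrq ⊢
  have := q.isLt
  unfold IsEndpoint at hi
  omega

theorem IsSimple.not_isEndpoint_apply {m : ℕ} {σ : Equiv.Perm (Fin m)} (hσ : IsSimple σ)
    (hm : 3 ≤ m) {i : Fin m} (hi : IsEndpoint i) : ¬ IsEndpoint (σ i) := by
  intro hσi
  have hint : IsPermInterval σ {i}ᶜ := by
    refine ⟨setContiguous_compl_singleton hi, ?_⟩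
    rw [image_compl_eq σ.bijective, image_singleton]
    exact setContiguous_compl_singleton hσi
  rcases hσ.2 _ hint with hcard | huniv
  · rw [ncard_compl, ncard_singleton, Nat.card_eq_fintype_card, Fintype.card_fin] at hcard
    omega
  · exact (huniv.symm ▸ mem_univ i : i ∈ ({i}ᶜ : Set (Fin m))) rfl

theorem IsSimple.length_ne_three {m : ℕ} {σ : Equiv.Perm (Fin m)} (hσ : IsSimple σ) : m ≠ 3 := by
  rintro rfl
  have h0 := hσ.not_isEndpoint_apply le_rfl (i := 0) (Or.inl rfl)
  have h2 := hσ.not_isEndpoint_apply le_rfl (i := 2) (Or.inr rfl)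
  have h02 : σ 0 = σ 2 := by
    simp only [IsEndpoint, not_or] at h0 h2
    ext; have := (σ 0).isLt; have := (σ 2).isLt; omega
  exact absurd (σ.injective h02) (by decide)

theorem isEndpoint_of_forall_not_isEndpoint {N m : ℕ} (hm : 4 ≤ m) {f g : Fin N → Fin m}
    (hg : Surjective g) {u t : Fin m} (hgf : ∀ x, ¬ IsEndpoint (g x) → f x = u)
    (hfg : ∀ x, ¬ IsEndpoint (f x) → g x = t) : IsEndpoint u := by
  by_contra hu
  have hconst : ∀ s : Fin m, ¬ IsEndpoint s → s = t := fun s hs => by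
    obtain ⟨x, rfl⟩ := hg s
    exact hfg x (hgf x hs ▸ hu)
  have h1 := hconst ⟨1, by omega⟩ (by simp only [IsEndpoint]; omega)
  have h2 := hconst ⟨2, by omega⟩ (by simp only [IsEndpoint]; omega)
  exact absurd (h1.trans h2.symm) (by simp [Fin.ext_iff])

theorem Fin.eq_id_of_monotone_of_surjective {m : ℕ} {g : Fin m → Fin m} (hg : Monotone g)
    (hsurj : Surjective g) : g = id := by
  have hmono : StrictMono g :=
    hg.strictMono_of_injective (Finite.injective_iff_surjective.2 hsurj)
  exact (hmono.range_inj strictMono_id).1 (by rw [hsurj.range_eq, range_id])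

theorem eq_of_monotone_of_surjective {N m : ℕ} {b v : Fin N → Fin m} (hb : Monotone b)
    (hbs : Surjective b) (hv : Monotone v) (hvs : Surjective v)
    (h : ∀ x y, v x = v y → b x = b y) : b = v := by
  set w := surjInv hvs
  have hfactor : ∀ x, b x = b (w (v x)) := fun x => h _ _ (surjInv_eq hvs _).symm
  have hg : Monotone (b ∘ w) := by
    intro t t' htt'
    refine hb (le_of_not_gt fun hlt => ?_)
    have ht't : t' ≤ t := by simpa only [w, surjInv_eq hvs] using hv hlt.le
    exact hlt.ne (by rw [le_antisymm htt' ht't])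
  have hgs : Surjective (b ∘ w) := fun i => by
    obtain ⟨x, rfl⟩ := hbs i
    exact ⟨v x, (hfactor x).symm⟩
  funext x
  rw [hfactor x]
  exact congrFun (Fin.eq_id_of_monotone_of_surjective hg hgs) (v x)

/-- `b x` is the block of the position `x` and `v y` the block of the value `y`. -/
structure IsBlockDecomposition {N m : ℕ} (π : Equiv.Perm (Fin N)) (σ : Equiv.Perm (Fin m))
    (b v : Fin N → Fin m) : Prop where
  monotone_pos : Monotone b
  monotone_val : Monotone v
  surjective_pos : Surjective b
  surjective_val : Surjective v
  val_apply : ∀ x, v (π x) = σ (b x)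

namespace IsBlockDecomposition

variable {N m : ℕ} {π : Equiv.Perm (Fin N)} {σ : Equiv.Perm (Fin m)} {b v : Fin N → Fin m}

theorem inv (D : IsBlockDecomposition π σ b v) : IsBlockDecomposition π⁻¹ σ⁻¹ v b where
  monotone_pos := D.monotone_val
  monotone_val := D.monotone_pos
  surjective_pos := D.surjective_val
  surjective_val := D.surjective_pos
  val_apply y := by
    rw [Equiv.Perm.inv_def, Equiv.Perm.inv_def, Equiv.eq_symm_apply, ← D.val_apply,
      Equiv.apply_symm_apply]

theorem image_preimage_pos (D : IsBlockDecomposition π σ b v) (i : Fin m) :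
    π '' (b ⁻¹' {i}) = v ⁻¹' {σ i} := by
  ext y
  rw [Equiv.image_eq_preimage_symm]
  simp only [mem_preimage, mem_singleton_iff]
  rw [← σ.injective.eq_iff, ← D.val_apply, Equiv.apply_symm_apply]

theorem image_image (D : IsBlockDecomposition π σ b v) (S : Set (Fin N)) :
    σ '' (b '' S) = v '' (π '' S) := by
  simp only [Set.image_image, D.val_apply]

theorem isPermInterval_image (D : IsBlockDecomposition π σ b v) {S : Set (Fin N)}
    (hS : IsPermInterval π S) : IsPermInterval σ (b '' S) :=
  ⟨hS.1.image D.monotone_pos D.surjective_pos,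
    D.image_image S ▸ hS.2.image D.monotone_val D.surjective_val⟩

theorem isPermInterval_preimage_val (D : IsBlockDecomposition π σ b v) (hπ : π⁻¹ = π)
    (t : Fin m) : IsPermInterval π (v ⁻¹' {t}) := by
  refine ⟨setContiguous_preimage_singleton D.monotone_val t, ?_⟩
  have h := D.inv.image_preimage_pos t
  rw [hπ] at h
  rw [h]
  exact setContiguous_preimage_singleton D.monotone_pos _

theorem pos_eq_val_of_inv_eq (D : IsBlockDecomposition π σ b v) (hπ : π⁻¹ = π)
    (hσ : IsSimple σ) (hm : 4 ≤ m) : b = v := by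
  have hJ : ∀ t, IsPermInterval σ (b '' (v ⁻¹' {t})) :=
    fun t => D.isPermInterval_image (D.isPermInterval_preimage_val hπ t)
  by_cases hsub : ∀ t, (b '' (v ⁻¹' {t})).Subsingleton
  · refine eq_of_monotone_of_surjective D.monotone_pos D.surjective_pos D.monotone_val
      D.surjective_val fun x y hxy => hsub (v x) ⟨x, rfl, rfl⟩ ⟨y, hxy.symm, rfl⟩
  obtain ⟨t, ht⟩ := not_forall.1 hsub
  have hJt : b '' (v ⁻¹' {t}) = univ :=
    (hσ.2 _ (hJ t)).resolve_left (by rwa [ncard_le_one_iff_subsingleton])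
  -- the value block `t` meets every position block, so by symmetry the position block
  -- `u = σ⁻¹ t` meets every value block
  set u := σ⁻¹ t
  have hIu : π '' (v ⁻¹' {t}) = b ⁻¹' {u} := by
    have h := D.inv.image_preimage_pos t
    rwa [hπ] at h
  have hIu' : v '' (b ⁻¹' {u}) = univ := by
    rw [← hIu, ← D.image_image, hJt, image_univ, Equiv.range_eq_univ]
  have hV : ∀ x, ¬ IsEndpoint (b x) → v x = t := fun x hx =>
    (D.isPermInterval_preimage_val hπ t).1.mem_of_image_eq_univ D.monotone_pos hJt hx
  have hI : ∀ x, ¬ IsEndpoint (v x) → b x = u := fun x hx =>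
    (setContiguous_preimage_singleton D.monotone_pos u).mem_of_image_eq_univ D.monotone_val
      hIu' hx
  have hu : IsEndpoint u := isEndpoint_of_forall_not_isEndpoint hm D.surjective_val hI hV
  have ht : IsEndpoint t := isEndpoint_of_forall_not_isEndpoint hm D.surjective_pos hV hI
  exact (hσ.not_isEndpoint_apply (by omega) hu (by simpa [u] using ht)).elim

end IsBlockDecomposition

theorem isInvolution_iff_involutive {n : ℕ} {π : Equiv.Perm (Fin n)} :
    IsInvolution π ↔ Involutive π := by
  rw [IsInvolution, inv_eq_iff_mul_eq_one, Equiv.Perm.ext_iff]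
  rfl

theorem Equiv.Perm.eq_one_or_eq_swap_of_fin_two (σ : Equiv.Perm (Fin 2)) :
    σ = 1 ∨ σ = Equiv.swap 0 1 := by
  revert σ
  decide

theorem lexSigma_orderIso_apply_of_eq {m N : ℕ} {k k' : Fin m → ℕ} (h : ∀ t, k' t = k t)
    (W' : (Σₗ t : Fin m, Fin (k' t)) ≃o Fin N) (W : (Σₗ t : Fin m, Fin (k t)) ≃o Fin N)
    (t : Fin m) (a : Fin (k' t)) : W' (toLex ⟨t, a⟩) = W (toLex ⟨t, Fin.cast (h t) a⟩) := by
  obtain rfl : k' = k := funext h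
  rw [Subsingleton.elim W' W]
  rfl

theorem eq_permCongr_inv_iff {n n' : ℕ} (h : n' = n) (e : Equiv.Perm (Fin n))
    (f : Equiv.Perm (Fin n')) :
    e = (finCongr h).permCongr f⁻¹ ↔ ∀ a, (f (Fin.cast h.symm (e a)) : ℕ) = a := by
  subst h
  simp only [Equiv.ext_iff, Fin.cast_eq_self, Fin.val_inj]
  exact forall_congr' fun a => Equiv.Perm.eq_inv_iff_eq

section Inflation

variable {m N : ℕ} {σ : Equiv.Perm (Fin m)} {k : Fin m → ℕ} {α : ∀ i, Equiv.Perm (Fin (k i))}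

noncomputable def blockIndex (W : (Σₗ i : Fin m, Fin (k i)) ≃o Fin N) (x : Fin N) : Fin m :=
  (ofLex (W.symm x)).1

theorem blockIndex_apply (W : (Σₗ i : Fin m, Fin (k i)) ≃o Fin N) (p : Σₗ i : Fin m, Fin (k i)) :
    blockIndex W (W p) = (ofLex p).1 := by
  simp [blockIndex]

theorem monotone_blockIndex (W : (Σₗ i : Fin m, Fin (k i)) ≃o Fin N) :
    Monotone (blockIndex W) := fun x y hxy => by
  rcases Sigma.Lex.le_def.1 (W.symm.monotone hxy) with h | ⟨h, -⟩
  exacts [h.le, h.le]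

theorem surjective_blockIndex (W : (Σₗ i : Fin m, Fin (k i)) ≃o Fin N) (hk : ∀ i, 0 < k i) :
    Surjective (blockIndex W) :=
  fun i => ⟨W (toLex ⟨i, ⟨0, hk i⟩⟩), blockIndex_apply W _⟩

theorem card_preimage_blockIndex (W : (Σₗ i : Fin m, Fin (k i)) ≃o Fin N) (i : Fin m) :
    Nat.card (blockIndex W ⁻¹' {i}) = k i := by
  rw [← Nat.card_fin (k i)]
  exact Nat.card_congr (((W.symm.toEquiv.trans ofLex).subtypeEquiv fun _ => Iff.rfl).trans
    (Equiv.sigmaSubtype i))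

/-- The value blocks of `inflation σ k α`, listed in increasing order of values. -/
noncomputable def valueBlockEquiv (σ : Equiv.Perm (Fin m)) (k : Fin m → ℕ) :
    (Σₗ t : Fin m, Fin (k (σ.symm t))) ≃o Fin (∑ i, k i) :=
  (finSigmaOrderEquiv fun t => k (σ.symm t)).trans (Fin.castOrderIso (Equiv.sum_comp σ.symm k))

theorem inflation_apply (i : Fin m) (a : Fin (k i)) :
    inflation σ k α (finSigmaOrderEquiv k (toLex ⟨i, a⟩)) =
      valueBlockEquiv σ k (toLex ⟨σ i, Fin.cast (by rw [σ.symm_apply_apply]) (α i a)⟩) := by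
  simp [inflation, valueBlockEquiv, Equiv.sigmaCongr]

theorem isBlockDecomposition_inflation (hk : ∀ i, 0 < k i) :
    IsBlockDecomposition (inflation σ k α) σ (blockIndex (finSigmaOrderEquiv k))
      (blockIndex (valueBlockEquiv σ k)) where
  monotone_pos := monotone_blockIndex _
  monotone_val := monotone_blockIndex _
  surjective_pos := surjective_blockIndex _ hk
  surjective_val := surjective_blockIndex _ fun _ => hk _
  val_apply x := by
    obtain ⟨p, rfl⟩ := (finSigmaOrderEquiv k).surjective x
    rw [← toLex_ofLex p, inflation_apply, blockIndex_apply, blockIndex_apply]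
    rfl

theorem inflation_apply_of_comp_eq (hkσ : ∀ i, k (σ i) = k i) (i : Fin m) (a : Fin (k i)) :
    inflation σ k α (finSigmaOrderEquiv k (toLex ⟨i, a⟩)) =
      finSigmaOrderEquiv k (toLex ⟨σ i, Fin.cast (hkσ i).symm (α i a)⟩) := by
  rw [inflation_apply, lexSigma_orderIso_apply_of_eq (fun t => by rw [← hkσ, σ.apply_symm_apply])
    (valueBlockEquiv σ k) (finSigmaOrderEquiv k), Fin.cast_cast]

theorem comp_eq_of_isInvolution_inflation (hσ : IsSimple σ)
    (hσ21 : ∀ h : m = 2, (finCongr h).permCongr σ ≠ Equiv.swap 0 1) (hk : ∀ i, 0 < k i)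
    (hπ : IsInvolution (inflation σ k α)) (i : Fin m) : k (σ i) = k i := by
  obtain rfl | rfl | hm : m = 2 ∨ m = 3 ∨ 4 ≤ m := by have := hσ.1; omega
  · obtain rfl : σ = 1 := σ.eq_one_or_eq_swap_of_fin_two.resolve_right (hσ21 rfl)
    rfl
  · exact absurd rfl hσ.length_ne_three
  · have hbv := (isBlockDecomposition_inflation hk).pos_eq_val_of_inv_eq hπ hσ hm
    calc k (σ i) = Nat.card (blockIndex (finSigmaOrderEquiv k) ⁻¹' {σ i}) :=
          (card_preimage_blockIndex _ _).symm
      _ = k (σ.symm (σ i)) := by rw [hbv, card_preimage_blockIndex]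
      _ = k i := by rw [σ.symm_apply_apply]

theorem isInvolution_inflation_iff_of_comp_eq (hk : ∀ i, 0 < k i) (hkσ : ∀ i, k (σ i) = k i) :
    IsInvolution (inflation σ k α) ↔
      IsInvolution σ ∧ ∀ i, ∃ h : k (σ i) = k i, α i = (finCongr h).permCongr (α (σ i))⁻¹ := by
  have hE : Surjective fun p : Σ i, Fin (k i) => finSigmaOrderEquiv k (toLex p) :=
    (finSigmaOrderEquiv k).surjective.comp toLex.surjective
  simp only [isInvolution_iff_involutive, Involutive, hE.forall, Sigma.forall,
    inflation_apply_of_comp_eq hkσ, (finSigmaOrderEquiv k).injective.eq_iff, toLex_inj,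
    Sigma.mk.inj_iff]
  refine ⟨fun h => ⟨fun i => (h i ⟨0, hk i⟩).1, fun i => ⟨hkσ i, ?_⟩⟩, fun ⟨hσσ, hα⟩ i a => ?_⟩
  · refine (eq_permCongr_inv_iff _ _ _).2 fun a => ?_
    simpa using (Fin.heq_ext_iff (by rw [(h i a).1])).1 (h i a).2
  · obtain ⟨h, hαi⟩ := hα i
    refine ⟨hσσ i, (Fin.heq_ext_iff (by rw [hσσ])).2 ?_⟩
    simpa using (eq_permCongr_inv_iff h _ _).1 hαi a

end Inflation

/-- For a simple permutation `σ ≠ 21`, the inflation `σ[α₁,…,α_m]` is an involution if and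
only if `σ` is an involution and `αᵢ = α_{σ(i)}⁻¹` for all `i`. -/
theorem inflation_involution_iff {m : ℕ} (σ : Equiv.Perm (Fin m)) (hσ : IsSimple σ)
    (hσ21 : ∀ h : m = 2, (finCongr h).permCongr σ ≠ Equiv.swap 0 1)
    (k : Fin m → ℕ) (hk : ∀ i, 0 < k i) (α : ∀ i, Equiv.Perm (Fin (k i))) :
    IsInvolution (inflation σ k α) ↔
      (IsInvolution σ ∧
        ∀ i, ∃ h : k (σ i) = k i, α i = (finCongr h).permCongr (α (σ i))⁻¹) := by
  refine ⟨fun hπ => ?_, fun h => ?_⟩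
  · have hkσ := comp_eq_of_isInvolution_inflation hσ hσ21 hk hπ
    exact (isInvolution_inflation_iff_of_comp_eq hk hkσ).1 hπ
  · exact (isInvolution_inflation_iff_of_comp_eq hk fun i => (h.2 i).1).2 h
end

section
/- A skew decomposable permutation is an involution if and only if it has one of the following two forms: (i) 21[α₁,α₂] = α₁⊖α₂ where α₁ and α₂ are skew indecomposable and α₁ = α₂^{-1}; or (ii) 321[α₁,α₂,α₃] = α₁⊖α₂⊖α₃ where α₁ and α₃ are skew indecomposable, α₁ = α₃^{-1}, and α₂ is an involution. -/
/-!
Cut `π` at the smallest `m > 0` such that its first `m` entries take the top `m` values; the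
first block `α` of the resulting skew sum is then skew indecomposable. For an involution the
cut at `m` is mirrored by a cut at `n - m`, so `m ≤ n - m` and `π = α ⊖ β ⊖ γ` with a possibly
empty middle block `β`. As `(α ⊖ β ⊖ γ)⁻¹ = γ⁻¹ ⊖ β⁻¹ ⊖ α⁻¹` and a skew sum with prescribed block
sizes determines its blocks, `π` is an involution exactly when `γ = α⁻¹` and `β` is an
involution; an empty `β` is form (i).
-/

open Equiv Fin

section SkewSum

variable {a b c n : ℕ}

@[simp]
theorem val_skewSum_castAdd_s5 (σ : Perm (Fin a)) (τ : Perm (Fin b)) (i : Fin a) :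
    (skewSum σ τ (castAdd b i)).val = b + σ i := by
  simp [skewSum, Nat.add_comm]

@[simp]
theorem val_skewSum_natAdd_s5 (σ : Perm (Fin a)) (τ : Perm (Fin b)) (j : Fin b) :
    (skewSum σ τ (natAdd a j)).val = τ j := by
  simp [skewSum]

theorem eq_skewSum_of_val {π : Perm (Fin (a + b))} {σ : Perm (Fin a)} {τ : Perm (Fin b)}
    (hleft : ∀ i, (π (castAdd b i)).val = b + σ i) (hright : ∀ j, (π (natAdd a j)).val = τ j) :
    π = skewSum σ τ := by
  ext x
  induction x using Fin.addCases with
  | left i => simp [hleft]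
  | right j => simp [hright]

theorem skewSum_inj {σ σ' : Perm (Fin a)} {τ τ' : Perm (Fin b)} :
    skewSum σ τ = skewSum σ' τ' ↔ σ = σ' ∧ τ = τ' := by
  refine ⟨fun h => ⟨?_, ?_⟩, fun ⟨hσ, hτ⟩ => hσ ▸ hτ ▸ rfl⟩
  · ext i
    simpa using congrArg (fun π => (π (castAdd b i)).val) h
  · ext j
    simpa using congrArg (fun π => (π (natAdd a j)).val) h

theorem permCongr_skewSum_skewSum_fin_zero (h : a + 0 + c = n) (h' : a + c = n)
    (α : Perm (Fin a)) (β : Perm (Fin 0)) (γ : Perm (Fin c)) :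
    (finCongr h).permCongr (skewSum (skewSum α β) γ) = (finCongr h').permCongr (skewSum α γ) := by
  subst h'
  simp only [finCongr_refl, permCongr_def, refl_symm, refl_trans, trans_refl]
  refine eq_skewSum_of_val (fun i => ?_) (fun j => ?_)
  · simpa using val_skewSum_castAdd_s5 α β i
  · simp

theorem skewSum_skewSum_inv (α γ : Perm (Fin a)) (β : Perm (Fin b)) :
    (skewSum (skewSum α β) γ)⁻¹ = skewSum (skewSum γ⁻¹ β⁻¹) α⁻¹ := by
  refine inv_eq_of_mul_eq_one_right (Equiv.ext fun x => ?_)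
  rw [Perm.mul_apply, Perm.one_apply]
  induction x using Fin.addCases with
  | left x =>
    induction x using Fin.addCases with
    | left i =>
      have : skewSum (skewSum γ⁻¹ β⁻¹) α⁻¹ (castAdd a (castAdd b i)) = natAdd (a + b) (γ⁻¹ i) :=
        Fin.ext (by simp only [val_skewSum_castAdd_s5, Perm.coe_inv, val_natAdd]; omega)
      rw [this]; ext; simp
    | right j =>
      have : skewSum (skewSum γ⁻¹ β⁻¹) α⁻¹ (castAdd a (natAdd a j)) = castAdd a (natAdd a (β⁻¹ j)) :=
        Fin.ext (by simp)
      rw [this]; ext; simp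
  | right k =>
    have : skewSum (skewSum γ⁻¹ β⁻¹) α⁻¹ (natAdd (a + b) k) = castAdd a (castAdd b (α⁻¹ k)) :=
      Fin.ext (by simp)
    rw [this]; ext
    simp only [Perm.coe_inv, val_skewSum_castAdd_s5, apply_symm_apply, val_natAdd]; omega

end SkewSum

theorem IsInvolution.apply_apply {n : ℕ} {π : Perm (Fin n)} (hπ : IsInvolution π) (i : Fin n) :
    π (π i) = i := by
  nth_rw 1 [← hπ]
  exact π.symm_apply_apply i

theorem isInvolution_permCongr {n n' : ℕ} (e : Fin n ≃ Fin n') (π : Perm (Fin n)) :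
    IsInvolution (e.permCongr π) ↔ IsInvolution π := by
  simp only [IsInvolution, ← e.permCongrHom_coe, ← map_inv, EmbeddingLike.apply_eq_iff_eq]

theorem isInvolution_skewSum_skewSum_iff {a b : ℕ} {α γ : Perm (Fin a)} {β : Perm (Fin b)} :
    IsInvolution (skewSum (skewSum α β) γ) ↔ γ = α⁻¹ ∧ IsInvolution β := by
  rw [IsInvolution, skewSum_skewSum_inv, skewSum_inj, skewSum_inj, inv_eq_iff_eq_inv]
  constructor
  · exact fun ⟨h, _⟩ => h
  · rintro ⟨rfl, hβ⟩
    exact ⟨⟨rfl, hβ⟩, rfl⟩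

def SkewSplitsAt {n : ℕ} (π : Perm (Fin n)) (a : ℕ) : Prop :=
  ∀ i : Fin n, i.val < a ↔ n - a ≤ (π i).val

section SkewSplitsAt

variable {a b n : ℕ}

theorem skewSplitsAt_skewSum (σ : Perm (Fin a)) (τ : Perm (Fin b)) :
    SkewSplitsAt (skewSum σ τ) a := by
  intro x
  induction x using Fin.addCases with
  | left i => simp
  | right j => simp

theorem skewSplitsAt_skewSum_iff {σ : Perm (Fin a)} {τ : Perm (Fin b)} {k : ℕ} (hk : k ≤ a) :
    SkewSplitsAt (skewSum σ τ) k ↔ SkewSplitsAt σ k := by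
  refine ⟨fun h i => ?_, fun h x => ?_⟩
  · have := h (castAdd b i)
    simp only [val_castAdd, val_skewSum_castAdd_s5, tsub_le_iff_right] at this
    omega
  · induction x using Fin.addCases with
    | left i =>
      have := h i
      simp only [val_castAdd, val_skewSum_castAdd_s5, tsub_le_iff_right]; omega
    | right j =>
      have := (τ j).2
      simp only [val_natAdd, val_skewSum_natAdd_s5, tsub_le_iff_right]; omega

theorem SkewDecomposable.exists_skewSplitsAt {π : Perm (Fin n)} (hπ : SkewDecomposable π) :
    ∃ a, 0 < a ∧ a < n ∧ SkewSplitsAt π a := by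
  obtain ⟨a, b, rfl, ha, hb, σ, τ, rfl⟩ := hπ
  refine ⟨a, ha, by omega, ?_⟩
  convert skewSplitsAt_skewSum σ τ
  ext; simp

theorem SkewSplitsAt.sub_of_isInvolution {π : Perm (Fin n)} (hπ : IsInvolution π) {a : ℕ}
    (h : SkewSplitsAt π a) : SkewSplitsAt π (n - a) := by
  intro i
  have := h (π i)
  rw [hπ.apply_apply] at this
  have := (π i).2
  omega

theorem SkewSplitsAt.exists_eq_skewSum {π : Perm (Fin (a + b))} (h : SkewSplitsAt π a) :
    ∃ σ τ, π = skewSum σ τ := by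
  have hleft (i : Fin a) : b ≤ (π (castAdd b i)).val := by
    have := (h (castAdd b i)).1 (by simp); omega
  have hright (j : Fin b) : (π (natAdd a j)).val < b := by
    have := (h (natAdd a j)).not.1 (by simp); omega
  let f (i : Fin a) : Fin a :=
    ⟨(π (castAdd b i)).val - b, by have := (π (castAdd b i)).2; have := i.2; omega⟩
  let g (j : Fin b) : Fin b := ⟨π (natAdd a j), hright j⟩
  have hf : f.Injective := fun i i' hii' => by
    have := hleft i; have := hleft i'
    simp only [f, Fin.ext_iff] at hii'
    exact castAdd_injective a b (π.injective (Fin.ext (by omega)))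
  have hg : g.Injective := fun j j' hjj' => by
    simp only [g, Fin.ext_iff] at hjj'
    exact natAdd_injective b a (π.injective (Fin.ext hjj'))
  refine ⟨.ofBijective f (Finite.injective_iff_bijective.1 hf),
    .ofBijective g (Finite.injective_iff_bijective.1 hg),
    eq_skewSum_of_val (fun i => ?_) (fun j => ?_)⟩
  · simp only [ofBijective_apply, f]; have := hleft i; omega
  · simp [g]

theorem SkewDecomposable.exists_minimal_skewSplitsAt {π : Perm (Fin n)}
    (hπ : SkewDecomposable π) :
    ∃ m, 0 < m ∧ m < n ∧ SkewSplitsAt π m ∧ ∀ k, 0 < k → k < m → ¬ SkewSplitsAt π k := by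
  classical
  have hex := hπ.exists_skewSplitsAt
  obtain ⟨hm0, hmn, hm⟩ := Nat.find_spec hex
  exact ⟨_, hm0, hmn, hm, fun k hk0 hkm hk => Nat.find_min hex hkm ⟨hk0, by omega, hk⟩⟩

theorem SkewDecomposable.exists_eq_skewSum_skewSum_inv {π : Perm (Fin n)}
    (hπ : SkewDecomposable π) (hinv : IsInvolution π) :
    ∃ (m c : ℕ) (h : m + c + m = n) (α : Perm (Fin m)) (β : Perm (Fin c)),
      0 < m ∧ ¬ SkewDecomposable α ∧ IsInvolution β ∧
      π = (finCongr h).permCongr (skewSum (skewSum α β) α⁻¹) := by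
  obtain ⟨m, hm0, hmn, hm, hmin⟩ := hπ.exists_minimal_skewSplitsAt
  have hle : m ≤ n - m :=
    not_lt.1 fun hlt => hmin _ (by omega) hlt (hm.sub_of_isInvolution hinv)
  obtain ⟨c, rfl⟩ : ∃ c, n = m + c + m := ⟨n - m - m, by omega⟩
  obtain ⟨σ, γ, rfl⟩ := (show SkewSplitsAt π (m + c) by
    simpa using hm.sub_of_isInvolution hinv).exists_eq_skewSum
  obtain ⟨α, β, rfl⟩ := ((skewSplitsAt_skewSum_iff (by omega)).1 hm).exists_eq_skewSum
  obtain ⟨rfl, hβ⟩ := isInvolution_skewSum_skewSum_iff.1 hinv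
  have hα : ¬ SkewDecomposable α := fun hα => by
    obtain ⟨k, hk0, hkm, hk⟩ := hα.exists_skewSplitsAt
    refine hmin k hk0 hkm ?_
    rwa [skewSplitsAt_skewSum_iff (by omega), skewSplitsAt_skewSum_iff hkm.le]
  exact ⟨m, c, rfl, α, β, hm0, hα, hβ, by ext; simp⟩

end SkewSplitsAt

/-- A skew decomposable permutation is an involution iff it has the form `α ⊖ α⁻¹` with `α`
skew indecomposable, or the form `α ⊖ β ⊖ α⁻¹` with `α` skew indecomposable and `β` an
involution. -/
theorem skewDecomposable_involution_iff {n : ℕ} (π : Equiv.Perm (Fin n))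
    (hπ : SkewDecomposable π) :
    IsInvolution π ↔
      ((∃ (m : ℕ) (h : m + m = n) (α : Equiv.Perm (Fin m)), 0 < m ∧
          ¬ SkewDecomposable α ∧ π = (finCongr h).permCongr (skewSum α α⁻¹)) ∨
        (∃ (m c : ℕ) (h : m + c + m = n) (α : Equiv.Perm (Fin m)) (β : Equiv.Perm (Fin c)),
          0 < m ∧ 0 < c ∧ ¬ SkewDecomposable α ∧ IsInvolution β ∧
          π = (finCongr h).permCongr (skewSum (skewSum α β) α⁻¹))) := by
  constructor
  · intro hinv
    obtain ⟨m, c, h, α, β, hm0, hα, hβ, rfl⟩ := hπ.exists_eq_skewSum_skewSum_inv hinv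
    rcases c.eq_zero_or_pos with rfl | hc
    · exact Or.inl ⟨m, h, α, hm0, hα, permCongr_skewSum_skewSum_fin_zero h h α β α⁻¹⟩
    · exact Or.inr ⟨m, c, h, α, β, hm0, hc, hα, hβ, rfl⟩
  · rintro (⟨m, h, α, -, -, rfl⟩ | ⟨m, c, h, α, β, -, -, -, hβ, rfl⟩)
    · rw [← permCongr_skewSum_skewSum_fin_zero h h α 1 α⁻¹, isInvolution_permCongr]
      exact isInvolution_skewSum_skewSum_iff.2 ⟨rfl, inv_one⟩
    · rw [isInvolution_permCongr]
      exact isInvolution_skewSum_skewSum_iff.2 ⟨rfl, hβ⟩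
end

section
/- A simple permutation avoids 123 if and only if it avoids both 1342 and 1423. Equivalently, the simple permutations of the class Av(1342,1423) are precisely the simple permutations of the class Av(123). -/
section AvoidanceAux

private lemma mk123' {n : ℕ} (π : Equiv.Perm (Fin n)) {a b c : Fin n}
    (hab : a < b) (hbc : b < c) (h1 : π a < π b) (h2 : π b < π c) :
    Contains π p123 := by
  refine ⟨![a, b, c], ?_, ?_⟩
  · intro x y hxy
    fin_cases x <;> fin_cases y <;> simp_all <;> exact lt_trans hab hbc
  · have e0 : p123 0 = 0 := rfl
    have e1 : p123 1 = 1 := rfl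
    have e2 : p123 2 = 2 := rfl
    have t1 : π a < π c := lt_trans h1 h2
    intro j k
    fin_cases j <;> fin_cases k <;> simp_all [lt_asymm, lt_irrefl]

private lemma ex123' {n : ℕ} (π : Equiv.Perm (Fin n)) (h : Contains π p123) :
    ∃ a b c : Fin n, a < b ∧ b < c ∧ π a < π b ∧ π b < π c := by
  obtain ⟨f, hf, hiff⟩ := h
  exact ⟨f 0, f 1, f 2, hf (by decide), hf (by decide),
    (hiff 0 1).mp (by decide), (hiff 1 2).mp (by decide)⟩

private lemma mk1342' {n : ℕ} (π : Equiv.Perm (Fin n)) {a b c d : Fin n}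
    (hab : a < b) (hbc : b < c) (hcd : c < d)
    (h1 : π a < π d) (h2 : π d < π b) (h3 : π b < π c) : Contains π p1342 := by
  refine ⟨![a, b, c, d], ?_, ?_⟩
  · intro x y hxy
    fin_cases x <;> fin_cases y <;> simp_all <;>
      first
        | exact lt_trans hab hbc
        | exact lt_trans hbc hcd
        | exact lt_trans (lt_trans hab hbc) hcd
  · have e0 : p1342 0 = 0 := rfl
    have e1 : p1342 1 = 2 := rfl
    have e2 : p1342 2 = 3 := rfl
    have e3 : p1342 3 = 1 := rfl
    have t1 : π a < π b := lt_trans h1 h2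
    have t2 : π a < π c := lt_trans t1 h3
    have t3 : π d < π c := lt_trans h2 h3
    intro j k
    fin_cases j <;> fin_cases k <;> simp_all [lt_asymm, lt_irrefl]

private lemma ex1342' {n : ℕ} (π : Equiv.Perm (Fin n)) (h : Contains π p1342) :
    ∃ a b c d : Fin n, a < b ∧ b < c ∧ c < d ∧ π a < π d ∧ π d < π b ∧ π b < π c := by
  obtain ⟨f, hf, hiff⟩ := h
  exact ⟨f 0, f 1, f 2, f 3, hf (by decide), hf (by decide), hf (by decide),
    (hiff 0 3).mp (by decide), (hiff 3 1).mp (by decide), (hiff 1 2).mp (by decide)⟩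

private lemma mk1423' {n : ℕ} (π : Equiv.Perm (Fin n)) {a b c d : Fin n}
    (hab : a < b) (hbc : b < c) (hcd : c < d)
    (h1 : π a < π c) (h2 : π c < π d) (h3 : π d < π b) : Contains π p1423 := by
  refine ⟨![a, b, c, d], ?_, ?_⟩
  · intro x y hxy
    fin_cases x <;> fin_cases y <;> simp_all <;>
      first
        | exact lt_trans hab hbc
        | exact lt_trans hbc hcd
        | exact lt_trans (lt_trans hab hbc) hcd
  · have e0 : p1423 0 = 0 := rfl
    have e1 : p1423 1 = 3 := rfl
    have e2 : p1423 2 = 1 := rfl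
    have e3 : p1423 3 = 2 := rfl
    have t1 : π a < π d := lt_trans h1 h2
    have t2 : π a < π b := lt_trans t1 h3
    have t3 : π c < π b := lt_trans h2 h3
    intro j k
    fin_cases j <;> fin_cases k <;> simp_all [lt_asymm, lt_irrefl]

private lemma ex1423' {n : ℕ} (π : Equiv.Perm (Fin n)) (h : Contains π p1423) :
    ∃ a b c d : Fin n, a < b ∧ b < c ∧ c < d ∧ π a < π c ∧ π c < π d ∧ π d < π b := by
  obtain ⟨f, hf, hiff⟩ := h
  exact ⟨f 0, f 1, f 2, f 3, hf (by decide), hf (by decide), hf (by decide),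
    (hiff 0 2).mp (by decide), (hiff 2 3).mp (by decide), (hiff 3 1).mp (by decide)⟩

private lemma main_interval {n : ℕ} (π : Equiv.Perm (Fin n))
    (h13 : ∀ a b c d : Fin n, a < b → b < c → c < d →
      π a < π d → π d < π b → π b < π c → False)
    (h14 : ∀ a b c d : Fin n, a < b → b < c → c < d →
      π a < π c → π c < π d → π d < π b → False)
    {a0 b0 c0 : Fin n} (hab0 : a0 < b0) (hbc0 : b0 < c0)
    (hv1 : π a0 < π b0) (hv2 : π b0 < π c0) :
    ∃ S : Set (Fin n), IsPermInterval π S ∧ 1 < S.ncard ∧ S ≠ Set.univ := by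
  classical
  -- the set of "good" points
  set G : Finset (Fin n) :=
    Finset.univ.filter (fun j => ∃ x y, j < x ∧ x < y ∧ π j < π x ∧ π x < π y) with hG
  have hGne : G.Nonempty := ⟨a0, by
    simp only [hG, Finset.mem_filter, Finset.mem_univ, true_and]
    exact ⟨b0, c0, hab0, hbc0, hv1, hv2⟩⟩
  set i : Fin n := G.max' hGne with hi
  have notGood : ∀ j, i < j → ∀ x y, j < x → x < y → π j < π x → π x < π y → False := by
    intro j hij x y h1 h2 h3 h4
    have : j ∈ G := by
      simp only [hG, Finset.mem_filter, Finset.mem_univ, true_and]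
      exact ⟨x, y, h1, h2, h3, h4⟩
    exact absurd (G.le_max' j this) (not_le.mpr hij)
  have hiG : i ∈ G := G.max'_mem hGne
  simp only [hG, Finset.mem_filter, Finset.mem_univ, true_and] at hiG
  obtain ⟨xh, yh, hixh, hxhyh, hvixh, hvxhyh⟩ := hiG
  -- tops of ascents after i
  set A : Finset (Fin n) :=
    Finset.univ.filter (fun t => ∃ s, i < s ∧ s < t ∧ π i < π s ∧ π s < π t) with hA
  have hAne : A.Nonempty := ⟨yh, by
    simp only [hA, Finset.mem_filter, Finset.mem_univ, true_and]
    exact ⟨xh, hixh, hxhyh, hvixh, hvxhyh⟩⟩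
  obtain ⟨y0, hy0A, hy0min⟩ := A.exists_min_image π hAne
  have hy0min' : ∀ t s, i < s → s < t → π i < π s → π s < π t → π y0 ≤ π t := by
    intro t s h1 h2 h3 h4
    exact hy0min t (by
      simp only [hA, Finset.mem_filter, Finset.mem_univ, true_and]
      exact ⟨s, h1, h2, h3, h4⟩)
  simp only [hA, Finset.mem_filter, Finset.mem_univ, true_and] at hy0A
  obtain ⟨s0, his0, hs0y0, hvis0, hvs0y0⟩ := hy0A
  have hiy0 : i < y0 := lt_trans his0 hs0y0
  -- the first layer X
  set X : Finset (Fin n) :=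
    Finset.univ.filter (fun t => i < t ∧ π i < π t ∧ π t < π y0) with hX
  have hmemX : ∀ t, t ∈ X ↔ (i < t ∧ π i < π t ∧ π t < π y0) := by
    intro t; simp only [hX, Finset.mem_filter, Finset.mem_univ, true_and]
  have hs0X : s0 ∈ X := (hmemX s0).mpr ⟨his0, hvis0, hvs0y0⟩
  have hXne : X.Nonempty := ⟨s0, hs0X⟩
  set b : Fin n := X.max' hXne with hb
  have hbX : b ∈ X := X.max'_mem hXne
  obtain ⟨hib, hvib, hvby0⟩ := (hmemX b).mp hbX
  have hs0b : s0 ≤ b := X.le_max' s0 hs0X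
  -- Claim Y : every element of X is left of y0
  have claimY : ∀ x ∈ X, x < y0 := by
    intro x hx
    obtain ⟨hix, hvix, hvxy0⟩ := (hmemX x).mp hx
    rcases lt_trichotomy x y0 with h | h | h
    · exact h
    · exact absurd hvxy0 (by rw [h]; exact lt_irrefl _)
    · -- y0 < x
      rcases lt_trichotomy (π s0) (π x) with hv | hv | hv
      · exact absurd (hy0min' x s0 his0 (lt_trans hs0y0 h) hvis0 hv)
          (not_le.mpr hvxy0)
      · exact absurd (π.injective hv) (ne_of_lt (lt_trans hs0y0 h))
      · exact absurd (h13 i s0 y0 x his0 hs0y0 h hvix hv hvs0y0) (not_false_iff.mpr trivial)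
  have hby0 : b < y0 := claimY b hbX
  -- Claim 1 : positions in (i, b] have values in (π i, π y0)
  have claim1 : ∀ t, i < t → t ≤ b → π i < π t ∧ π t < π y0 := by
    intro t hit htb
    rcases eq_or_lt_of_le htb with h | htb'
    · rw [h]; exact ⟨hvib, hvby0⟩
    rcases lt_trichotomy (π t) (π i) with hv | hv | hv
    · exact absurd (notGood t hit b y0 htb' hby0 (lt_trans hv hvib) hvby0)
        (not_false_iff.mpr trivial)
    · exact absurd (π.injective hv) (ne_of_gt hit)
    · rcases lt_trichotomy (π t) (π y0) with hw | hw | hw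
      · exact ⟨hv, hw⟩
      · exact absurd (π.injective hw) (ne_of_lt (lt_trans htb' hby0))
      · exact absurd (h14 i t b y0 hit htb' hby0 hvib hvby0 hw)
          (not_false_iff.mpr trivial)
  -- LOW lemma
  have low : ∀ q ℓ, q < i → b < ℓ → π ℓ < π i → π ℓ < π q := by
    intro q ℓ hqi hbl hvli
    rcases lt_trichotomy (π ℓ) (π q) with hv | hv | hv
    · exact hv
    · exact absurd (π.injective hv)
        (ne_of_gt (lt_trans hqi (lt_trans his0 (lt_of_le_of_lt hs0b hbl))))
    · exact absurd (h13 q i s0 ℓ hqi his0 (lt_of_le_of_lt hs0b hbl) hv hvli hvis0)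
        (not_false_iff.mpr trivial)
  -- the interval
  set S : Set (Fin n) := {q | q ≤ b ∧ ∀ o, o < i → π y0 ≤ π o → o < q} with hS
  have hiS : i ∈ S := ⟨le_of_lt hib, fun o ho _ => ho⟩
  have hs0S : s0 ∈ S := ⟨hs0b, fun o ho _ => lt_trans ho his0⟩
  have hy0S : y0 ∉ S := fun h => absurd h.1 (not_le.mpr hby0)
  have svals : ∀ q ∈ S, π q < π y0 := by
    intro q hq
    rcases lt_trichotomy q i with h | h | h
    · by_contra hc
      exact absurd (hq.2 q h (not_lt.mp hc)) (lt_irrefl q)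
    · rw [h]; exact lt_trans hvis0 hvs0y0
    · exact (claim1 q h hq.1).2
  refine ⟨S, ⟨?_, ?_⟩, ?_, ?_⟩
  · -- positions contiguous
    intro q1 q2 k hq1 hq2 h1 h2
    exact ⟨le_trans h2 hq2.1, fun o ho1 ho2 => lt_of_lt_of_le (hq1.2 o ho1 ho2) h1⟩
  · -- values contiguous
    rintro u1 u2 v ⟨q1, hq1, rfl⟩ ⟨q2, hq2, rfl⟩ h1 h2
    set r : Fin n := π.symm v with hr
    have hrv : π r = v := π.apply_symm_apply v
    rw [← hrv] at h1 h2
    refine ⟨r, ?_, hrv⟩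
    have hrb : r ≤ b := by
      by_contra hc
      have hbr : b < r := not_le.mp hc
      have hir : i < r := lt_trans hib hbr
      rcases lt_trichotomy (π r) (π i) with hv | hv | hv
      · -- r is a low point after b
        rcases lt_trichotomy q1 i with h | h | h
        · exact absurd h1 (not_le.mpr (low q1 r h hbr hv))
        · rw [h] at h1; exact absurd (lt_of_le_of_lt h1 hv) (lt_irrefl _)
        · exact absurd (lt_of_le_of_lt h1 (lt_trans hv (claim1 q1 h hq1.1).1))
            (not_lt.mpr (le_refl _))
      · exact absurd (π.injective hv) (ne_of_gt hir)
      · rcases lt_trichotomy (π r) (π y0) with hw | hw | hw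
        · exact absurd ((hmemX r).mpr ⟨hir, hv, hw⟩)
            (fun hm => absurd (X.le_max' r hm) (not_le.mpr hbr))
        · rw [hw] at h2
          exact absurd (lt_of_le_of_lt h2 (svals q2 hq2)) (lt_irrefl _)
        · exact absurd (lt_of_le_of_lt (le_trans (le_of_lt hw) h2) (svals q2 hq2))
            (lt_irrefl _)
    refine ⟨hrb, ?_⟩
    intro o ho1 ho2
    by_contra hc
    have hro : r ≤ o := not_lt.mp hc
    rcases eq_or_lt_of_le hro with h | hro'
    · rw [← h] at ho2
      exact absurd (lt_of_le_of_lt (le_trans ho2 h2) (svals q2 hq2)) (lt_irrefl _)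
    · -- r < o : find 1423 as (r, o, q2, y0)
      have hrq2 : π r < π q2 := by
        rcases eq_or_lt_of_le h2 with h | h
        · exact absurd (hq2.2 o ho1 ho2) (not_lt.mpr (le_of_lt (by
            rw [π.injective h] at hro'; exact hro')))
        · exact h
      have hy0o : π y0 < π o := by
        rcases eq_or_lt_of_le ho2 with h | h
        · exact absurd (π.injective h.symm) (ne_of_lt (lt_trans ho1 hiy0))
        · exact h
      exact absurd (h14 r o q2 y0 hro' (hq2.2 o ho1 ho2)
        (lt_of_le_of_lt hq2.1 hby0) hrq2 (svals q2 hq2) hy0o) (not_false_iff.mpr trivial)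
  · -- 1 < ncard
    have : ({i, s0} : Set (Fin n)) ⊆ S := by
      intro z hz; rcases hz with h | h
      · rw [h]; exact hiS
      · rw [h]; exact hs0S
    calc 1 < ({i, s0} : Set (Fin n)).ncard := by
            rw [Set.ncard_pair (ne_of_lt his0)]; norm_num
      _ ≤ S.ncard := Set.ncard_le_ncard this (Set.toFinite S)
  · intro h
    exact hy0S (h ▸ Set.mem_univ y0)

end AvoidanceAux

/-- A simple permutation avoids `123` iff it avoids both `1342` and `1423`. -/



theorem simple_av123_iff_av1342_av1423 {n : ℕ} (π : Equiv.Perm (Fin n))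
    (hπ : IsSimple π) :
    ¬ Contains π p123 ↔ (¬ Contains π p1342 ∧ ¬ Contains π p1423) := by
  constructor
  · intro h
    constructor
    · intro hc
      obtain ⟨a, b, c, d, hab, hbc, hcd, h1, h2, h3⟩ := ex1342' π hc
      exact h (mk123' π hab hbc (lt_trans h1 h2) h3)
    · intro hc
      obtain ⟨a, b, c, d, hab, hbc, hcd, h1, h2, h3⟩ := ex1423' π hc
      exact h (mk123' π (lt_trans hab hbc) hcd h1 h2)
  · rintro ⟨h13c, h14c⟩ hc
    obtain ⟨a0, b0, c0, hab0, hbc0, hv1, hv2⟩ := ex123' π hc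
    have h13 : ∀ a b c d : Fin n, a < b → b < c → c < d →
        π a < π d → π d < π b → π b < π c → False :=
      fun a b c d hab hbc hcd h1 h2 h3 => h13c (mk1342' π hab hbc hcd h1 h2 h3)
    have h14 : ∀ a b c d : Fin n, a < b → b < c → c < d →
        π a < π c → π c < π d → π d < π b → False :=
      fun a b c d hab hbc hcd h1 h2 h3 => h14c (mk1423' π hab hbc hcd h1 h2 h3)
    obtain ⟨S, hSint, hS1, hSuniv⟩ := main_interval π h13 h14 hab0 hbc0 hv1 hv2
    rcases hπ.2 S hSint with h | h
    · exact absurd (lt_of_lt_of_le hS1 h) (lt_irrefl 1)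
    · exact hSuniv h
end

section
/- In every 123-avoiding permutation, each entry is a left-to-right minimum or a right-to-left maximum (or both). Moreover, if the permutation is simple and has length at least 4, then no entry is simultaneously a left-to-right minimum and a right-to-left maximum. -/
def IsLRMin {n : ℕ} (π : Equiv.Perm (Fin n)) (i : Fin n) : Prop :=
  ∀ j, j < i → π i < π j

def IsRLMax {n : ℕ} (π : Equiv.Perm (Fin n)) (i : Fin n) : Prop :=
  ∀ j, i < j → π j < π i

/-- In a `123`-avoiding permutation every entry is a left-to-right minimum or a
right-to-left maximum; if moreover the permutation is simple of length at least `4`, then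
no entry is both. -/
theorem av123_lrmin_or_rlmax {n : ℕ} (π : Equiv.Perm (Fin n)) (h : ¬ Contains π p123) :
    (∀ i, IsLRMin π i ∨ IsRLMax π i) ∧
      (IsSimple π → 4 ≤ n → ∀ i, ¬ (IsLRMin π i ∧ IsRLMax π i)) := by
  constructor
  · intro i
    by_contra hc
    push_neg at hc
    obtain ⟨h1, h2⟩ := hc
    simp only [IsLRMin, IsRLMax] at h1 h2
    push_neg at h1 h2
    obtain ⟨j, hji, hpj⟩ := h1
    obtain ⟨k, hik, hpk⟩ := h2
    have hji' : π j < π i := lt_of_le_of_ne hpj (fun e => (ne_of_lt hji) (π.injective e))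
    have hpk' : π i < π k := lt_of_le_of_ne hpk (fun e => (ne_of_lt hik) (π.injective e))
    apply h
    refine ⟨![j, i, k], ?_, ?_⟩
    · intro a b hab
      fin_cases a <;> fin_cases b <;>
        first
          | exact absurd hab (by decide)
          | simpa using hji
          | simpa using hik
          | simpa using hji.trans hik
    · intro a b
      fin_cases a <;> fin_cases b <;> simp [p123] <;>
        first
          | exact hji'
          | exact hpk'
          | exact hji'.trans hpk'
          | exact le_of_lt hji'
          | exact le_of_lt hpk'
          | exact le_of_lt (hji'.trans hpk')
  · rintro hs hn i ⟨hmin, hmax⟩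
    have key : ∀ T : Set (Fin n), IsPermInterval π T → i ∉ T → T.ncard ≤ 1 := by
      intro T hT hiT
      rcases hs.2 T hT with h' | h'
      · exact h'
      · exact absurd (h' ▸ Set.mem_univ i) hiT
    -- interval of indices left of i
    have hT1 : IsPermInterval π {j | j < i} := by
      constructor
      · intro a b c ha hb hab hbc
        exact lt_of_le_of_lt hbc hb
      · have himg : π '' {j | j < i} = {v | π i < v} := by
          ext v
          constructor
          · rintro ⟨j, hj, rfl⟩
            exact hmin j hj
          · intro hv
            refine ⟨π.symm v, ?_, π.apply_symm_apply v⟩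
            by_contra hle
            simp only [Set.mem_setOf_eq, not_lt] at hle
            rcases eq_or_lt_of_le hle with he | hlt
            · rw [he, π.apply_symm_apply] at hv
              exact absurd (show v < v from hv) (lt_irrefl v)
            · have := hmax _ hlt
              rw [π.apply_symm_apply] at this
              exact absurd (hv.trans this) (lt_irrefl _)
        rw [himg]
        intro a b c ha hb hab hbc
        exact lt_of_lt_of_le ha hab
    have hT2 : IsPermInterval π {j | i < j} := by
      constructor
      · intro a b c ha hb hab hbc
        exact lt_of_lt_of_le ha hab
      · have himg : π '' {j | i < j} = {v | v < π i} := by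
          ext v
          constructor
          · rintro ⟨j, hj, rfl⟩
            exact hmax j hj
          · intro hv
            refine ⟨π.symm v, ?_, π.apply_symm_apply v⟩
            by_contra hle
            simp only [Set.mem_setOf_eq, not_lt] at hle
            rcases eq_or_lt_of_le hle with he | hlt
            · rw [← he, π.apply_symm_apply] at hv
              exact absurd (show v < v from hv) (lt_irrefl v)
            · have := hmin _ hlt
              rw [π.apply_symm_apply] at this
              exact absurd (hv.trans this) (lt_irrefl _)
        rw [himg]
        intro a b c ha hb hab hbc
        exact lt_of_le_of_lt hbc hb
    have h1 := key _ hT1 (by simp only [Set.mem_setOf_eq]; exact lt_irrefl i)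
    have h2 := key _ hT2 (by simp only [Set.mem_setOf_eq]; exact lt_irrefl i)
    -- derive numeric bounds
    have hi1 : (i : ℕ) ≤ 1 := by
      by_contra hgt
      push_neg at hgt
      have hmem0 : (⟨0, by omega⟩ : Fin n) ∈ {j | j < i} := by
        simp only [Set.mem_setOf_eq, Fin.lt_def, Fin.val_mk]; omega
      have hmem1 : (⟨1, by omega⟩ : Fin n) ∈ {j | j < i} := by
        simp only [Set.mem_setOf_eq, Fin.lt_def, Fin.val_mk]; omega
      have : 1 < ({j | j < i} : Set (Fin n)).ncard :=
        Set.one_lt_ncard_iff (Set.toFinite _) |>.mpr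
          ⟨_, _, hmem0, hmem1, (by intro hq; simp only [Fin.mk.injEq] at hq; omega)⟩
      omega
    have hi2 : n ≤ (i : ℕ) + 2 := by
      by_contra hgt
      push_neg at hgt
      have hmem0 : (⟨(i : ℕ) + 1, by omega⟩ : Fin n) ∈ {j | i < j} := by
        simp only [Set.mem_setOf_eq, Fin.lt_def, Fin.val_mk]; omega
      have hmem1 : (⟨(i : ℕ) + 2, by omega⟩ : Fin n) ∈ {j | i < j} := by
        simp only [Set.mem_setOf_eq, Fin.lt_def, Fin.val_mk]; omega
      have : 1 < ({j | i < j} : Set (Fin n)).ncard :=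
        Set.one_lt_ncard_iff (Set.toFinite _) |>.mpr
          ⟨_, _, hmem0, hmem1, (by intro hq; simp only [Fin.mk.injEq] at hq; omega)⟩
      omega
    omega
end

section
/- For n ≥ 0, let p_n be the number of pairs (e,v) of words of length n over the alphabet {a,b,c,d} such that neither e nor v contains the factor cb (i.e., the letter c immediately followed by the letter b), the letter a occurs in e and in v in exactly the same set of positions, and the letter d occurs in e and in v in exactly the same set of positions. Then the generating function ∑_{n≥0} p_n x^n equals (1+x)/(1 − 5x + x² − x³). -/
/-- The word `w` over the alphabet `{a,b,c,d} = {0,1,2,3}` has no factor `cb`, i.e. no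
letter `c = 2` immediately followed by the letter `b = 1`. -/
def NoCBFactor {n : ℕ} (w : Fin n → Fin 4) : Prop :=
  ∀ (i : ℕ) (h : i + 1 < n), ¬ (w ⟨i, Nat.lt_of_succ_lt h⟩ = 2 ∧ w ⟨i + 1, h⟩ = 1)

/-- Number of pairs `(e, v)` of words of length `n` over `{a,b,c,d} = {0,1,2,3}`, neither
containing the factor `cb`, with the letter `a = 0` occurring in the same positions in `e`
and `v`, and likewise for the letter `d = 3`. -/
noncomputable def pairCount (n : ℕ) : ℕ :=
  Nat.card {ev : (Fin n → Fin 4) × (Fin n → Fin 4) //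
    NoCBFactor ev.1 ∧ NoCBFactor ev.2 ∧ (∀ i, ev.1 i = 0 ↔ ev.2 i = 0) ∧
      (∀ i, ev.1 i = 3 ↔ ev.2 i = 3)}

open Matrix PowerSeries

theorem card_subtype_eq_sum_card_fiber {β γ : Type*} [Fintype β] [Fintype γ] [DecidableEq γ]
    (P : β → Prop) [DecidablePred P] (f : β → γ) :
    Fintype.card {b // P b} = ∑ c, Fintype.card {b // P b ∧ f b = c} := by
  rw [← Fintype.card_sigma]
  exact Fintype.card_congr ((Equiv.sigmaFiberEquiv fun b : {b // P b} => f b).symm.trans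
    (Equiv.sigmaCongrRight fun c => Equiv.subtypeSubtypeEquivSubtypeInter P fun b => f b = c))

section Chains

variable {α : Type*} (R : α → α → Prop)

theorem isChain_ofFn_cons {n : ℕ} (a : α) (w : Fin (n + 1) → α) :
    (List.ofFn (Fin.cons a w : Fin (n + 2) → α)).IsChain R ↔
      R a (w 0) ∧ (List.ofFn w).IsChain R := by
  simp [List.ofFn_succ]

def consChainEquiv (n : ℕ) (a : α) :
    {w : Fin (n + 2) → α // (List.ofFn w).IsChain R ∧ w 0 = a} ≃
      {w : Fin (n + 1) → α // (List.ofFn w).IsChain R ∧ R a (w 0)} where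
  toFun w := ⟨Fin.tail w.1, by
    obtain ⟨w, hw, rfl⟩ := w
    rw [← Fin.cons_self_tail w, isChain_ofFn_cons] at hw
    exact hw.symm⟩
  invFun w := ⟨Fin.cons a w.1, (isChain_ofFn_cons R a w.1).2 w.2.symm, rfl⟩
  left_inv w := by
    obtain ⟨w, hw, rfl⟩ := w
    exact Subtype.ext (Fin.cons_self_tail w)
  right_inv _ := rfl

variable [DecidableRel R]

def relMatrix : Matrix α α ℕ := Matrix.of fun a b => if R a b then 1 else 0

variable [Fintype α] [DecidableEq α]

def chainsFrom (n : ℕ) (a : α) : ℕ :=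
  Fintype.card {w : Fin (n + 1) → α // (List.ofFn w).IsChain R ∧ w 0 = a}

theorem chainsFrom_zero : chainsFrom R 0 = 1 := by
  funext a
  refine Fintype.card_eq_one_iff.2 ⟨⟨fun _ => a, by simp, rfl⟩, fun w => ?_⟩
  exact Subtype.ext (funext fun i => by rw [Fin.fin_one_eq_zero i]; exact w.2.2)

theorem chainsFrom_succ (n : ℕ) : chainsFrom R (n + 1) = relMatrix R *ᵥ chainsFrom R n := by
  funext a
  rw [chainsFrom, Fintype.card_congr (consChainEquiv R n a),
    card_subtype_eq_sum_card_fiber _ fun w => w 0, mulVec, dotProduct]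
  refine Fintype.sum_congr _ _ fun b => ?_
  by_cases hab : R a b
  · simp only [relMatrix, of_apply, if_pos hab, one_mul, chainsFrom]
    exact Fintype.card_congr (Equiv.subtypeEquivRight fun w =>
      ⟨fun ⟨⟨hw, _⟩, hb⟩ => ⟨hw, hb⟩, fun ⟨hw, hb⟩ => ⟨⟨hw, hb ▸ hab⟩, hb⟩⟩)
  · simp only [relMatrix, of_apply, if_neg hab, zero_mul, Fintype.card_eq_zero_iff]
    exact ⟨fun ⟨w, ⟨_, h⟩, hb⟩ => hab (hb ▸ h)⟩

theorem chainsFrom_eq_pow_mulVec (n : ℕ) : chainsFrom R n = relMatrix R ^ n *ᵥ 1 := by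
  induction n with
  | zero => rw [chainsFrom_zero, pow_zero, one_mulVec]
  | succ n ih => rw [chainsFrom_succ, ih, pow_succ', mulVec_mulVec]

theorem card_chains_succ (n : ℕ) :
    Fintype.card {w : Fin (n + 1) → α // (List.ofFn w).IsChain R} =
      1 ⬝ᵥ (relMatrix R ^ n *ᵥ 1) := by
  rw [card_subtype_eq_sum_card_fiber _ fun w => w 0, one_dotProduct, ← chainsFrom_eq_pow_mulVec]
  rfl

end Chains

theorem PowerSeries.mk_mul_one_sub_cubic {R : Type*} [CommRing R] (s : ℕ → R) (a b c : R)
    (h : ∀ n, s (n + 3) = a * s (n + 2) + b * s (n + 1) + c * s n) :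
    mk s * (1 - C a * X - C b * X ^ 2 - C c * X ^ 3) =
      C (s 0) + C (s 1 - a * s 0) * X + C (s 2 - a * s 1 - b * s 0) * X ^ 2 := by
  ext n
  rcases n with _ | _ | _ | n
  all_goals
    simp [mul_sub, mul_left_comm (mk s), ← mul_assoc, coeff_mul_X_pow', coeff_succ_mul_X, h]
    try ring

def NoCB (x y : Fin 4) : Prop := ¬(x = 2 ∧ y = 1)

instance : DecidableRel NoCB := fun _ _ => by unfold NoCB; infer_instance

abbrev PairLetter := {p : Fin 4 × Fin 4 // (p.1 = 0 ↔ p.2 = 0) ∧ (p.1 = 3 ↔ p.2 = 3)}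

def PairNoCB (p q : PairLetter) : Prop := NoCB p.1.1 q.1.1 ∧ NoCB p.1.2 q.1.2

instance : DecidableRel PairNoCB := fun _ _ => by unfold PairNoCB; infer_instance

def pairWordEquiv (n : ℕ) :
    {ev : (Fin n → Fin 4) × (Fin n → Fin 4) //
      NoCBFactor ev.1 ∧ NoCBFactor ev.2 ∧ (∀ i, ev.1 i = 0 ↔ ev.2 i = 0) ∧
        (∀ i, ev.1 i = 3 ↔ ev.2 i = 3)} ≃
      {w : Fin n → PairLetter // (List.ofFn w).IsChain PairNoCB} where
  toFun ev := ⟨fun i => ⟨(ev.1.1 i, ev.1.2 i), ev.2.2.2.1 i, ev.2.2.2.2 i⟩,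
    List.isChain_ofFn.2 fun i h => ⟨ev.2.1 i h, ev.2.2.1 i h⟩⟩
  invFun w := ⟨(fun i => (w.1 i).1.1, fun i => (w.1 i).1.2),
    fun i h => (List.isChain_ofFn.1 w.2 i h).1, fun i h => (List.isChain_ofFn.1 w.2 i h).2,
    fun i => (w.1 i).2.1, fun i => (w.1 i).2.2⟩
  left_inv _ := rfl
  right_inv _ := rfl

theorem pairCount_eq_card (n : ℕ) :
    pairCount n = Fintype.card {w : Fin n → PairLetter // (List.ofFn w).IsChain PairNoCB} := by
  rw [pairCount, Nat.card_congr (pairWordEquiv n), Nat.card_eq_fintype_card]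

theorem relMatrix_pairNoCB_cubic :
    relMatrix PairNoCB ^ 3 *ᵥ 1 + relMatrix PairNoCB *ᵥ 1 =
      5 • (relMatrix PairNoCB ^ 2 *ᵥ 1) + 1 := by
  decide

theorem pairCount_succ_rec (n : ℕ) :
    pairCount (n + 4) + pairCount (n + 2) = 5 * pairCount (n + 3) + pairCount (n + 1) := by
  simp only [pairCount_eq_card, card_chains_succ]
  have := congrArg (fun v => 1 ⬝ᵥ (relMatrix PairNoCB ^ n *ᵥ v)) relMatrix_pairNoCB_cubic
  simpa only [mulVec_add, mulVec_smul, dotProduct_add, dotProduct_smul, mulVec_mulVec, ← pow_add,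
    ← pow_succ, smul_eq_mul] using this

theorem pairCount_zero : pairCount 0 = 1 := by
  rw [pairCount_eq_card, Fintype.card_eq_one_iff]
  exact ⟨⟨Fin.elim0, by simp⟩, fun w => Subtype.ext (funext fun i => i.elim0)⟩

theorem pairCount_one_two_three : pairCount 1 = 6 ∧ pairCount 2 = 29 ∧ pairCount 3 = 140 := by
  simp only [pairCount_eq_card, card_chains_succ]
  decide

/-- `∑ pₙ xⁿ = (1 + x)/(1 - 5x + x² - x³)`. -/
theorem pairCount_gf :
    (PowerSeries.mk fun n => (pairCount n : ℚ)) *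
        (1 - 5 * PowerSeries.X + PowerSeries.X ^ 2 - PowerSeries.X ^ 3) =
      1 + PowerSeries.X := by
  have hrec (n : ℕ) : (pairCount (n + 1 + 3) : ℚ) =
      5 * pairCount (n + 1 + 2) + -1 * pairCount (n + 1 + 1) + 1 * pairCount (n + 1) := by
    have := pairCount_succ_rec n
    qify at this
    linarith
  have hgf := mk_mul_one_sub_cubic (fun n => (pairCount (n + 1) : ℚ)) 5 (-1) 1 hrec
  obtain ⟨h1, h2, h3⟩ := pairCount_one_two_three
  rw [eq_X_mul_shift_add_const (mk _)]
  simp only [coeff_mk, constantCoeff_mk, pairCount_zero, h1, h2, h3] at hgf ⊢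
  norm_num [map_ofNat] at hgf ⊢
  linear_combination X * hgf
end

section
/- Every 1324-avoiding permutation π can be partitioned into two (possibly empty) subsequences such that one subsequence is order-isomorphic to a 132-avoiding permutation and the other is order-isomorphic to a 213-avoiding permutation; moreover, the partition can be chosen so that every right-to-left maximum of π lies in the 213-avoiding subsequence. -/
/-- `π` contains the pattern `σ` within the set of positions `S`. -/
def ContainsWithin {n k : ℕ} (π : Equiv.Perm (Fin n)) (S : Set (Fin n))
    (σ : Equiv.Perm (Fin k)) : Prop :=
  ∃ f : Fin k → Fin n, StrictMono f ∧ (∀ i, f i ∈ S) ∧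
    ∀ i j : Fin k, σ i < σ j ↔ π (f i) < π (f j)

/-- Greedy right-to-left coloring: `i` is red iff there are two blue (non-red) positions
`j < k` to its right with `π j < π i < π k`. -/
def RedSet {n : ℕ} (π : Equiv.Perm (Fin n)) : Fin n → Prop :=
  (wellFounded_gt (α := Fin n)).fix
    (fun i IH => ∃ j, ∃ h1 : j > i, ∃ k, ∃ h2 : k > j, ¬ IH j h1 ∧ ¬ IH k (h1.trans h2) ∧
      π j < π i ∧ π i < π k)

lemma redSet_iff {n : ℕ} (π : Equiv.Perm (Fin n)) (i : Fin n) :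
    RedSet π i ↔ ∃ j, ∃ _ : j > i, ∃ k, ∃ _ : k > j, ¬ RedSet π j ∧ ¬ RedSet π k ∧
      π j < π i ∧ π i < π k := by
  rw [show RedSet π i = _ from WellFounded.fix_eq _ _ i]
  exact Iff.rfl

lemma contains_p1324_of {n : ℕ} (π : Equiv.Perm (Fin n)) {x1 x2 x3 x4 : Fin n}
    (h12 : x1 < x2) (h23 : x2 < x3) (h34 : x3 < x4)
    (v13 : π x1 < π x3) (v32 : π x3 < π x2) (v24 : π x2 < π x4) :
    Contains π p1324 := by
  have o12 : π x1 < π x2 := v13.trans v32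
  have o14 : π x1 < π x4 := o12.trans v24
  have o34 : π x3 < π x4 := v32.trans v24
  refine ⟨![x1, x2, x3, x4], ?_, ?_⟩
  · intro i j hij
    fin_cases i <;> fin_cases j <;>
      simp_all <;>
      first
        | exact h12 | exact h23 | exact h34
        | exact h12.trans h23 | exact h23.trans h34 | exact (h12.trans h23).trans h34
  · intro i j
    fin_cases i <;> fin_cases j <;> simp_all <;>
      first
        | decide
        | assumption
        | exact lt_irrefl _
        | exact asymm v13 | exact asymm v32 | exact asymm v24
        | exact asymm o12 | exact asymm o14 | exact asymm o34
        | (refine iff_of_false ?_ ?_ <;>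
            first
              | decide
              | exact asymm v13 | exact asymm v32 | exact asymm v24
              | exact asymm o12 | exact asymm o14 | exact asymm o34)

/-- Every `1324`-avoiding permutation is the merge of a `132`-avoiding permutation and a
`213`-avoiding permutation, where the partition can be chosen so that every right-to-left
maximum lies in the `213`-avoiding part. -/

theorem av1324_merge {n : ℕ} (π : Equiv.Perm (Fin n)) (h : ¬ Contains π p1324) :
    ∃ R : Set (Fin n), ¬ ContainsWithin π R p132 ∧ ¬ ContainsWithin π Rᶜ p213 ∧
      ∀ i, IsRLMax π i → i ∈ Rᶜ := by
  refine ⟨{i | RedSet π i}, ?_, ?_, ?_⟩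
  · rintro ⟨f, hmono, hmem, hpat⟩
    have hab : f 0 < f 1 := hmono (by decide)
    have hbc : f 1 < f 2 := hmono (by decide)
    have hac : π (f 0) < π (f 2) := (hpat 0 2).1 (by decide)
    have hcb : π (f 2) < π (f 1) := (hpat 2 1).1 (by decide)
    obtain ⟨p, hp, q, hq, hbp, hbq, wp, wq⟩ := (redSet_iff π (f 1)).1 (hmem 1)
    obtain ⟨d, hd, e, he, hbd, hbe, wd, we⟩ := (redSet_iff π (f 2)).1 (hmem 2)
    rcases lt_trichotomy q (f 2) with h2 | h2 | h2
    · -- q < c : positions f0 < f1 < p < q < f2 < d < e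
      have hpd : p < d := hq.trans (h2.trans hd)
      rcases lt_or_ge (π p) (π d) with h3 | h3
      · exact h (contains_p1324_of π (hq.trans h2) hd he h3 wd we)
      · have h3' : π d < π p := h3.lt_of_ne' (π.injective.ne (ne_of_lt hpd))
        have hep : ¬ π p < π e := fun hpe =>
          hbp ((redSet_iff π p).2 ⟨d, hpd, e, he, hbd, hbe, h3', hpe⟩)
        have hep' : π e < π p :=
          (not_lt.1 hep).lt_of_ne' (π.injective.ne (ne_of_lt (hpd.trans he)))
        have hap : π (f 0) < π p := (hac.trans we).trans hep'
        exact h (contains_p1324_of π hab hp hq hap wp wq)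
    · exact hbq (h2 ▸ hmem 2)
    · exact h (contains_p1324_of π hab hbc h2 hac hcb wq)
  · rintro ⟨f, hmono, hmem, hpat⟩
    have hb : ∀ i, ¬ RedSet π (f i) := fun i => by
      have := hmem i
      simpa [Set.mem_compl_iff, Set.mem_setOf_eq] using this
    have h10 : π (f 1) < π (f 0) := (hpat 1 0).1 (by decide)
    have h02 : π (f 0) < π (f 2) := (hpat 0 2).1 (by decide)
    exact hb 0 ((redSet_iff π (f 0)).2
      ⟨f 1, hmono (by decide), f 2, hmono (by decide), hb 1, hb 2, h10, h02⟩)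
  · intro i hrl
    simp only [Set.mem_compl_iff, Set.mem_setOf_eq]
    intro hred
    obtain ⟨j, hj, k, hk, -, -, -, hik⟩ := (redSet_iff π i).1 hred
    exact lt_asymm hik (hrl k (hj.trans hk))
end
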